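/- arXiv:1403.5908 — 9 statements merged into one kernel-verified Lean document; each statement's English description precedes it below -/
import Mathlib

section
/- The map φ(z) = (z+1)²/z is injective on the punctured open unit disk 𝔻 \ {0} (where 𝔻 = {z ∈ ℂ : |z| < 1}), and its image is exactly ℂ \ [0,4], i.e. φ is a bijection from 𝔻 \ {0} onto the complement in ℂ of the real segment [0,4]. -/
/-!
Writing `φ z = z + 2 + z⁻¹`, one has `φ z = φ w ↔ z = w ∨ z * w = 1` for nonzero `z, w`, so each
value of `φ` is taken exactly at a pair `{z, z⁻¹}` (the roots of `z² + (2 - c) z + 1`). Such a pair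
has exactly one point in the punctured disk unless both lie on the unit circle, and on the unit
circle `φ z = 2 + 2 Re z` sweeps out exactly `[0, 4]`.
-/

open Complex

noncomputable def phi (z : ℂ) : ℂ := (z + 1) ^ 2 / z

lemma phi_inv (z : ℂ) : phi z⁻¹ = phi z := by
  rcases eq_or_ne z 0 with rfl | hz
  · simp [phi]
  · simp only [phi]
    field_simp
    ring

lemma phi_eq_phi_iff {z w : ℂ} (hz : z ≠ 0) (hw : w ≠ 0) :
    phi z = phi w ↔ z = w ∨ z * w = 1 := by
  have hfactor : (z + 1) ^ 2 * w - (w + 1) ^ 2 * z = (z - w) * (z * w - 1) := by ring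
  rw [phi, phi, div_eq_div_iff hz hw, ← sub_eq_zero, hfactor, mul_eq_zero, sub_eq_zero,
    sub_eq_zero]

lemma exists_ne_zero_phi_eq (c : ℂ) : ∃ z ≠ 0, phi z = c := by
  obtain ⟨s, hs⟩ := IsAlgClosed.exists_pow_nat_eq (discrim 1 (2 - c) 1) two_pos
  obtain ⟨z, hz⟩ := exists_quadratic_eq_zero one_ne_zero ⟨s, by rw [← hs, sq]⟩
  have hz0 : z ≠ 0 := by rintro rfl; simp at hz
  exact ⟨z, hz0, by rw [phi, div_eq_iff hz0]; linear_combination hz⟩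

lemma phi_of_norm_eq_one {u : ℂ} (hu : ‖u‖ = 1) : phi u = 2 + 2 * u.re := by
  have hu0 : u ≠ 0 := norm_ne_zero_iff.mp (by rw [hu]; exact one_ne_zero)
  have hconj : u⁻¹ = (starRingEnd ℂ) u := inv_eq_conj hu
  have hre : u + (starRingEnd ℂ) u = ↑(2 * u.re) := add_conj u
  push_cast at hre
  calc phi u = 2 + u + u⁻¹ := by simp only [phi]; field_simp; ring
    _ = 2 + 2 * u.re := by rw [hconj]; linear_combination hre

lemma exists_mem_Icc_phi_eq_of_norm_eq_one {u : ℂ} (hu : ‖u‖ = 1) :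
    ∃ x ∈ Set.Icc (0 : ℝ) 4, (x : ℂ) = phi u := by
  have hre : |u.re| ≤ 1 := hu ▸ abs_re_le_norm u
  refine ⟨2 + 2 * u.re, ⟨?_, ?_⟩, ?_⟩
  · linarith [neg_abs_le u.re]
  · linarith [le_abs_self u.re]
  · rw [phi_of_norm_eq_one hu]; push_cast; ring

lemma exists_norm_eq_one_phi_eq {x : ℝ} (hx : x ∈ Set.Icc (0 : ℝ) 4) :
    ∃ u : ℂ, ‖u‖ = 1 ∧ phi u = x := by
  set a := (x - 2) / 2
  have ha : a ^ 2 ≤ 1 := by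
    obtain ⟨h0, h4⟩ := hx
    simp only [a]
    nlinarith
  let u : ℂ := ⟨a, √(1 - a ^ 2)⟩
  have hu : ‖u‖ = 1 := by
    rw [← pow_eq_one_iff_of_nonneg (norm_nonneg u) two_ne_zero, ← normSq_eq_norm_sq, normSq_apply]
    simp only [u]
    nlinarith [Real.mul_self_sqrt (sub_nonneg.mpr ha)]
  refine ⟨u, hu, ?_⟩
  rw [phi_of_norm_eq_one hu]
  simp only [u, a]
  push_cast
  ring

lemma norm_eq_one_of_phi_eq_ofReal {z : ℂ} (hz : z ≠ 0) {x : ℝ} (hx : x ∈ Set.Icc (0 : ℝ) 4)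
    (h : phi z = x) : ‖z‖ = 1 := by
  obtain ⟨u, hu, hux⟩ := exists_norm_eq_one_phi_eq hx
  have hu0 : u ≠ 0 := norm_ne_zero_iff.mp (by rw [hu]; exact one_ne_zero)
  rcases (phi_eq_phi_iff hz hu0).mp (h.trans hux.symm) with rfl | hzu
  · exact hu
  · simpa [hu] using congrArg norm hzu

/-- The map `φ(z) = (z+1)²/z` is injective on the punctured open unit disk
`𝔻 \ {0}`, and its image is exactly `ℂ \ [0,4]`. -/
theorem stmt_0 :
    Set.InjOn (fun z : ℂ => (z + 1) ^ 2 / z)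
      ({z : ℂ | ‖z‖ < 1} \ {0}) ∧
    (fun z : ℂ => (z + 1) ^ 2 / z) '' ({z : ℂ | ‖z‖ < 1} \ {0}) =
      ((fun x : ℝ => (x : ℂ)) '' Set.Icc (0 : ℝ) 4)ᶜ := by
  show Set.InjOn phi _ ∧ phi '' _ = _
  refine ⟨?injective, Set.Subset.antisymm ?image_subset ?subset_image⟩
  · rintro z ⟨hz1, hz0⟩ w ⟨hw1, hw0⟩ h
    refine ((phi_eq_phi_iff hz0 hw0).mp h).resolve_right fun hzw => ?_
    have : ‖z‖ * ‖w‖ < 1 := mul_lt_one_of_nonneg_of_lt_one_left (norm_nonneg z) hz1 hw1.le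
    simp [← norm_mul, hzw] at this
  · rintro _ ⟨z, ⟨hz1, hz0⟩, rfl⟩ ⟨x, hx, hxz⟩
    exact (norm_eq_one_of_phi_eq_ofReal hz0 hx hxz.symm).not_lt hz1
  · intro c hc
    obtain ⟨z, hz0, rfl⟩ := exists_ne_zero_phi_eq c
    rcases lt_trichotomy ‖z‖ 1 with hz1 | hz1 | hz1
    · exact ⟨z, ⟨hz1, hz0⟩, rfl⟩
    · exact absurd (exists_mem_Icc_phi_eq_of_norm_eq_one hz1) hc
    · refine ⟨z⁻¹, ⟨?_, inv_ne_zero hz0⟩, phi_inv z⟩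
      simpa [norm_inv] using inv_lt_one_of_one_lt₀ hz1
end

section
/- Let t > 0 and set c_t = 2e^{−t/2} − 1. For every z ∈ 𝔻 \ {0}, with K_t(z) ∈ 𝔻 \ {0} the unique point satisfying (K_t(z)+1)²/K_t(z) = e^{t/2}(z+1)²/z, one has K_t(z)/(1 − K_t(z)) = −1/2 + (z+1)/(2·√(1 − 2z·c_t + z²)), where √ denotes the principal branch of the complex square root (well defined since 1 − 2z·c_t + z² ∉ (−∞,0] for z ∈ 𝔻). -/
/-!
Clearing denominators, `K = K_t(z)` satisfies `(1 + K)² (1 - 2 z c_t + z²) = (1 + z)² (1 - K)²`,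
so `(1 + K)/(1 - K)` and `(1 + z)/√(1 - 2 z c_t + z²)` agree up to sign, and it suffices that both
lie in the right half-plane. For the first this is `|K| < 1`. For the second write `c_t = cos 2φ`
with `0 ≤ φ < π/2`, so that `1 - 2 z c_t + z² = (1 - e^{2iφ} z)(1 - e^{-2iφ} z)`. The identity
`Re (e^{-iφ} (1 - e^{2iφ} z) conj (1 + z)) = cos φ (1 - |z|²) > 0` (and its conjugate) puts
`arg (1 - e^{2iφ} z) - arg (1 + z)` and `arg (1 + z) - arg (1 - e^{-2iφ} z)` within `π/2` of `φ`,
hence `arg (1 + z)` within `π/2` of the argument of the principal square root, which is half the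
sum of the two arguments.
-/

open Complex ComplexConjugate Real

theorem Real.abs_lt_pi_div_two_of_cos_pos {x : ℝ} (hx : |x| < 3 * π / 2) (hcos : 0 < cos x) :
    |x| < π / 2 := by
  by_contra! h
  have := cos_nonpos_of_pi_div_two_le_of_le h (by linarith)
  rw [cos_abs] at this
  linarith

namespace Complex

theorem re_one_sub_pos {x : ℂ} (hx : ‖x‖ < 1) : 0 < (1 - x).re := by
  rw [sub_re, one_re, sub_pos]
  exact (re_le_norm x).trans_lt hx

theorem re_one_add_div_one_sub_pos {w : ℂ} (hw : ‖w‖ < 1) : 0 < ((1 + w) / (1 - w)).re := by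
  have hw1 : 1 - w ≠ 0 := fun h => by simpa [h] using re_one_sub_pos hw
  have : ((1 + w) / (1 - w)).re = (1 - ‖w‖ ^ 2) / normSq (1 - w) := by
    rw [div_re, ← add_div, Complex.sq_norm]
    congr 1
    simp only [normSq_apply, add_re, sub_re, add_im, sub_im, one_re, one_im]
    ring
  rw [this]
  exact div_pos (by nlinarith [norm_nonneg w]) (normSq_pos.2 hw1)

theorem eq_of_sq_eq_of_re_pos {x y : ℂ} (h : x ^ 2 = y ^ 2) (hx : 0 < x.re) (hy : 0 < y.re) :
    x = y := by
  refine (sq_eq_sq_iff_eq_or_eq_neg.1 h).resolve_right fun hxy => ?_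
  rw [hxy, neg_re] at hx
  linarith

theorem re_exp_neg_mul_I_mul_mul_conj (ψ : ℝ) (u v : ℂ) :
    (exp (-ψ * I) * u * conj v).re = ‖u‖ * ‖v‖ * Real.cos (arg u - arg v - ψ) := by
  have key : exp (-ψ * I) * u * conj v
      = ((‖u‖ * ‖v‖ : ℝ) : ℂ) * exp ((arg u - arg v - ψ : ℝ) * I) := by
    conv_lhs => rw [← norm_mul_exp_arg_mul_I u, ← norm_mul_exp_arg_mul_I v]
    rw [map_mul, conj_ofReal, ← exp_conj, map_mul, conj_ofReal, conj_I]
    push_cast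
    rw [show ((arg u - arg v - ψ : ℂ)) * I = -ψ * I + arg u * I + arg v * -I by ring, exp_add,
      exp_add]
    ring
  rw [key, re_ofReal_mul, exp_ofReal_mul_I_re]

theorem abs_arg_sub_arg_sub_lt_pi_div_two {u v : ℂ} {ψ : ℝ} (hu : 0 < u.re) (hv : 0 < v.re)
    (hψ : |ψ| ≤ π / 2) (h : 0 < (exp (-ψ * I) * u * conj v).re) :
    |arg u - arg v - ψ| < π / 2 := by
  have hu' := abs_lt.1 (abs_arg_lt_pi_div_two_iff.2 (.inl hu))
  have hv' := abs_lt.1 (abs_arg_lt_pi_div_two_iff.2 (.inl hv))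
  have hψ' := abs_le.1 hψ
  rw [re_exp_neg_mul_I_mul_mul_conj] at h
  refine Real.abs_lt_pi_div_two_of_cos_pos (abs_lt.2 ⟨by linarith, by linarith⟩)
    (pos_of_mul_pos_right h (by positivity))

theorem arg_cpow_ofReal {x : ℂ} (hx : x ≠ 0) {y : ℝ} (h : arg x * y ∈ Set.Ioc (-π) π) :
    arg (x ^ (y : ℂ)) = arg x * y := by
  have him : (log x * y).im = arg x * y := by simp [log_im]
  rw [cpow_def_of_ne_zero hx, arg_exp, him, toIocMod_eq_self]
  simpa [two_mul, ← sub_eq_add_neg] using h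

theorem re_div_cpow_half_mul_pos {u a b : ℂ} {ψ : ℝ} (hu : 0 < u.re) (ha : 0 < a.re)
    (hb : 0 < b.re) (hψ : |ψ| ≤ π / 2) (hau : 0 < (exp (-ψ * I) * a * conj u).re)
    (hub : 0 < (exp (-ψ * I) * u * conj b).re) : 0 < (u / (a * b) ^ (1 / 2 : ℂ)).re := by
  have h₁ := abs_lt.1 (abs_arg_sub_arg_sub_lt_pi_div_two ha hu hψ hau)
  have h₂ := abs_lt.1 (abs_arg_sub_arg_sub_lt_pi_div_two hu hb hψ hub)
  have ha' := abs_lt.1 (abs_arg_lt_pi_div_two_iff.2 (.inl ha))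
  have hb' := abs_lt.1 (abs_arg_lt_pi_div_two_iff.2 (.inl hb))
  have hab0 : a * b ≠ 0 := mul_ne_zero (fun h => by simp [h] at ha) (fun h => by simp [h] at hb)
  have harg_ab : arg (a * b) = arg a + arg b :=
    arg_mul (left_ne_zero_of_mul hab0) (right_ne_zero_of_mul hab0)
      ⟨by linarith, by linarith⟩
  set s := (a * b) ^ (1 / 2 : ℂ) with hs
  have hs0 : s ≠ 0 := by simp [hs, hab0]
  have harg_s : arg s = (arg a + arg b) / 2 := by
    rw [hs, show (1 / 2 : ℂ) = ((1 / 2 : ℝ) : ℂ) by push_cast; rfl,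
      arg_cpow_ofReal hab0 (by rw [harg_ab]; constructor <;> linarith), harg_ab]
    ring
  have hcos : 0 < Real.cos (arg u - arg s) := by
    rw [harg_s]
    exact Real.cos_pos_of_mem_Ioo ⟨by linarith, by linarith⟩
  have hus : 0 < (u * conj s).re := by
    have h := re_exp_neg_mul_I_mul_mul_conj 0 u s
    simp only [ofReal_zero, neg_zero, zero_mul, exp_zero, one_mul, sub_zero] at h
    rw [h]
    exact mul_pos (mul_pos (norm_pos_iff.2 fun h => by simp [h] at hu) (norm_pos_iff.2 hs0)) hcos
  rw [div_re, ← add_div]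
  exact div_pos (by simpa [mul_re] using hus) (normSq_pos.2 hs0)

theorem re_exp_neg_mul_I_mul_one_sub_mul_conj (φ : ℝ) (z : ℂ) :
    (exp (-φ * I) * (1 - exp (2 * φ * I) * z) * conj (1 + z)).re = Real.cos φ * (1 - ‖z‖ ^ 2) := by
  set e := exp (φ * I) with he
  have hconj : exp (-φ * I) = conj e := by rw [he, ← exp_conj]; simp
  have hsq : exp (2 * φ * I) = e * e := by rw [he, ← exp_add]; ring_nf
  have hunit : conj e * e = 1 := by
    rw [← normSq_eq_conj_mul_self, normSq_eq_norm_sq, he, norm_exp_ofReal_mul_I]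
    norm_num
  have key : exp (-φ * I) * (1 - exp (2 * φ * I) * z) * conj (1 + z)
      = conj e + conj (e * z) - e * z - e * (normSq z : ℂ) := by
    rw [hconj, hsq, map_add, map_one, map_mul, normSq_eq_conj_mul_self]
    linear_combination (-(e * z * (1 + conj z))) * hunit
  rw [key, normSq_eq_norm_sq]
  simp only [sub_re, add_re, conj_re, re_mul_ofReal, he, exp_ofReal_mul_I_re]
  ring

theorem one_sub_two_mul_cos_add_sq (θ : ℝ) (z : ℂ) :
    1 - 2 * z * (Real.cos θ : ℂ) + z ^ 2 = (1 - exp (θ * I) * z) * (1 - exp (-θ * I) * z) := by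
  have hinv : exp (θ * I) * exp (-θ * I) = 1 := by rw [← exp_add]; simp
  rw [ofReal_cos]
  linear_combination (-z) * two_cos θ - z ^ 2 * hinv

theorem re_one_add_div_cpow_half_pos {z : ℂ} (hz : ‖z‖ < 1) {c : ℝ} (hc : c ∈ Set.Ioc (-1) 1) :
    0 < ((1 + z) / (1 - 2 * z * c + z ^ 2) ^ (1 / 2 : ℂ)).re := by
  set φ := arccos c / 2 with hφ_def
  have hφ : 0 ≤ φ ∧ φ < π / 2 := by
    rw [hφ_def]
    exact ⟨div_nonneg (arccos_nonneg c) two_pos.le, by linarith [arccos_lt_pi.2 hc.1]⟩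
  have hcos : Real.cos (2 * φ) = c := by
    rw [hφ_def, mul_div_cancel₀ _ two_ne_zero, cos_arccos hc.1.le hc.2]
  have hnorm (θ : ℝ) : ‖exp (θ * I) * z‖ < 1 := by rwa [norm_mul, norm_exp_ofReal_mul_I, one_mul]
  have hpos : 0 < Real.cos φ * (1 - ‖z‖ ^ 2) :=
    mul_pos (Real.cos_pos_of_mem_Ioo ⟨by linarith, hφ.2⟩) (by nlinarith [norm_nonneg z])
  rw [← hcos, one_sub_two_mul_cos_add_sq]
  push_cast
  refine re_div_cpow_half_mul_pos (ψ := φ) ?_ ?_ ?_ (abs_le.2 ⟨by linarith, hφ.2.le⟩) ?_ ?_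
  · simpa using re_one_sub_pos (x := -z) (by simpa using hz)
  · simpa only [ofReal_mul, ofReal_ofNat] using re_one_sub_pos (hnorm (2 * φ))
  · simpa only [ofReal_neg, ofReal_mul, ofReal_ofNat] using re_one_sub_pos (hnorm (-(2 * φ)))
  · rwa [re_exp_neg_mul_I_mul_one_sub_mul_conj]
  · have hswap : exp (-φ * I) * (1 + z) * conj (1 - exp (-(2 * φ) * I) * z)
        = exp (-φ * I) * (1 - exp (2 * φ * I) * conj z) * conj (1 + conj z) := by
      simp only [map_add, map_sub, map_one, map_mul, ← exp_conj, conj_conj, conj_ofReal, conj_I,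
        map_neg, map_ofNat]
      ring_nf
    rwa [hswap, re_exp_neg_mul_I_mul_one_sub_mul_conj, norm_conj]

theorem div_one_sub_eq_of_sq_mul_eq {w z D : ℂ} (hw : ‖w‖ < 1)
    (hre : 0 < ((1 + z) / D ^ (1 / 2 : ℂ)).re) (h : (1 + w) ^ 2 * D = (1 + z) ^ 2 * (1 - w) ^ 2) :
    w / (1 - w) = -(1 / 2) + (z + 1) / (2 * D ^ (1 / 2 : ℂ)) := by
  set s := D ^ (1 / 2 : ℂ) with hs
  have hs0 : s ≠ 0 := fun h => by simp [h] at hre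
  have hs2 : s ^ 2 = D := by rw [hs, one_div, cpow_ofNat_inv_pow]
  have hw1 : 1 - w ≠ 0 := fun h => by simpa [h] using re_one_sub_pos hw
  have hroot : (1 + w) / (1 - w) = (1 + z) / s := by
    refine eq_of_sq_eq_of_re_pos ?_ (re_one_add_div_one_sub_pos hw) hre
    rw [div_pow, div_pow, hs2, div_eq_div_iff (pow_ne_zero 2 hw1) (hs2 ▸ pow_ne_zero 2 hs0)]
    linear_combination h
  rw [div_eq_div_iff hw1 hs0] at hroot
  field_simp
  linear_combination hroot

end Complex

theorem one_add_sq_mul_eq_of_mul_sq_eq {R : Type*} [CommRing R] {q c z w : R}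
    (hq : q * (1 + c) = 2) (h : (w + 1) ^ 2 * z = q * (z + 1) ^ 2 * w) :
    (1 + w) ^ 2 * (1 - 2 * z * c + z ^ 2) = (1 + z) ^ 2 * (1 - w) ^ 2 := by
  linear_combination (-2 * w * (1 + z) ^ 2) * hq - 2 * (1 + c) * h

theorem two_mul_exp_neg_half_sub_one_mem_Ioc {t : ℝ} (ht : 0 ≤ t) :
    2 * Real.exp (-t / 2) - 1 ∈ Set.Ioc (-1) 1 := by
  have : Real.exp (-t / 2) ≤ 1 := Real.exp_le_one_iff.2 (by linarith)
  constructor <;> linarith [Real.exp_pos (-t / 2)]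

theorem exp_half_mul_one_add_two_mul_exp_neg_half_sub_one (t : ℝ) :
    Complex.exp (t / 2) * (1 + ((2 * Real.exp (-t / 2) - 1 : ℝ) : ℂ)) = 2 := by
  have h : Complex.exp (t / 2) * Complex.exp (-t / 2) = 1 := by
    rw [← Complex.exp_add, ← Complex.exp_zero]
    ring_nf
  push_cast
  linear_combination 2 * h

/-- For `t > 0`, `c_t = 2e^{-t/2} - 1`, and `z ∈ 𝔻 \ {0}`, if `w = K_t(z)` is the unique
point of `𝔻 \ {0}` with `(w+1)²/w = e^{t/2}(z+1)²/z`, then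
`w/(1-w) = -1/2 + (z+1)/(2√(1 - 2 z c_t + z²))`, with the principal complex square root. -/
theorem stmt_4 (t : ℝ) (ht : 0 < t) (z : ℂ) (hz : ‖z‖ < 1) (hz0 : z ≠ 0)
    (w : ℂ) (hw : ‖w‖ < 1 ∧ w ≠ 0)
    (hweq : (w + 1) ^ 2 / w = Complex.exp (t / 2) * (z + 1) ^ 2 / z) :
    w / (1 - w) =
      -(1 / 2) + (z + 1) /
        (2 * ((1 - 2 * z * ((2 * Real.exp (-t / 2) - 1 : ℝ) : ℂ) + z ^ 2) ^ (1 / 2 : ℂ))) := by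
  obtain ⟨hw1, hw0⟩ := hw
  have hpoly : (w + 1) ^ 2 * z = Complex.exp (t / 2) * (z + 1) ^ 2 * w := by
    field_simp at hweq
    linear_combination hweq
  exact div_one_sub_eq_of_sq_mul_eq hw1
    (re_one_add_div_cpow_half_pos hz (two_mul_exp_neg_half_sub_one_mem_Ioc ht.le))
    (one_add_sq_mul_eq_of_mul_sq_eq (exp_half_mul_one_add_two_mul_exp_neg_half_sub_one t) hpoly)
end

section
/- Let c ∈ (−1,1). For every z in the open unit disk 𝔻, the series ∑_{n≥1} (1/2)·(P_n(c) + P_{n−1}(c))·zⁿ converges and equals −1/2 + (z+1)/(2·√(1 − 2zc + z²)), where √ is the principal branch of the complex square root and P_n is the n-th Legendre polynomial. In particular, the n-th moment of the distribution μ_t of the monotone unitary Brownian motion at time t > 0 equals (1/2)·(P_n(2e^{−t/2}−1) + P_{n−1}(2e^{−t/2}−1)). -/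
/-!
For `c ∈ (-1, 1)` the quadratic `1 - 2cz + z²` avoids `(-∞, 0]` on the unit disc, so
`f(z) = (1 - 2cz + z²)^(-1/2)` is holomorphic there and equals its Taylor series on the whole disc.
Since `(1 - 2cz + z²) f' = (c - z) f`, comparing coefficients shows that the Taylor coefficients
satisfy Bonnet's recurrence `(n+2) aₙ₊₂ = (2n+3) c aₙ₊₁ - (n+1) aₙ` with `a₀ = 1`, `a₁ = c`.
The explicit formula for `Pₙ` satisfies the same recurrence: for the binary forms
`Sₙ(u, v) = ∑ₖ (n choose k)² u^(n-k) vᵏ` one has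
`(n+2) Sₙ₊₂ = (2n+3)(u+v) Sₙ₊₁ - (n+1)(v-u)² Sₙ`, a coefficientwise binomial identity, and
`Pₙ(x) = 2⁻ⁿ Sₙ(x-1, x+1)`. Hence `∑ Pₙ(c) zⁿ = f(z)`, the moment series is `(f - 1 + z f)/2`,
and uniqueness of power series coefficients identifies the moments.
-/

open Finset Complex Metric Topology
open scoped Nat

/-- The `n`-th Legendre polynomial, `P_n(x) = 2^{-n} ∑_{k=0}^n (n choose k)² (x-1)^{n-k} (x+1)^k`. -/
noncomputable def legendreP (n : ℕ) (x : ℝ) : ℝ :=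
  (1 / 2 ^ n) * ∑ k ∈ Finset.range (n + 1),
    (n.choose k : ℝ) ^ 2 * (x - 1) ^ (n - k) * (x + 1) ^ k

theorem Nat.choose_sq_recurrence (n j : ℕ) :
    (n + 2) * (n + 2).choose (j + 2) ^ 2 + (n + 1) * (n.choose (j + 2) ^ 2 + n.choose j ^ 2) =
      (2 * n + 3) * ((n + 1).choose (j + 2) ^ 2 + (n + 1).choose (j + 1) ^ 2) +
        2 * (n + 1) * n.choose (j + 1) ^ 2 := by
  have pascal (m i : ℕ) : ((m + 1).choose (i + 1) : ℚ) = m.choose i + m.choose (i + 1) := by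
    exact_mod_cast Nat.choose_succ_succ' m i
  have absorb (i : ℕ) : (n + 1 : ℚ) * n.choose i = (n.choose i + n.choose (i + 1)) * (i + 1) := by
    rw [← pascal]; exact_mod_cast Nat.add_one_mul_choose_eq n i
  have h₀ := absorb j
  have h₁ := absorb (j + 1)
  push_cast at h₁
  qify
  rw [pascal (n + 1), pascal n, pascal n (j + 1)]
  set a₀ : ℚ := (n.choose j : ℚ)
  set a₁ : ℚ := (n.choose (j + 1) : ℚ)
  set a₂ : ℚ := (n.choose (j + 2) : ℚ)
  have e₁ : a₁ = a₀ * (n - j) / (j + 1) :=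
    eq_div_of_mul_eq (by positivity) (by linear_combination -h₀)
  have e₂ : a₂ = a₁ * (n - j - 1) / (j + 2) :=
    eq_div_of_mul_eq (by positivity) (by linear_combination -h₁)
  rw [e₂, e₁]
  field_simp
  ring

/-- The coefficient sequence of `X * F` when `x` is that of `F`. -/
def shiftSeq {M : Type*} [Zero M] (x : ℕ → M) : ℕ → M
  | 0 => 0
  | n + 1 => x n

section HomogeneousForm

variable {R : Type*} [CommRing R]

def homForm (N : ℕ) (x : ℕ → R) (u v : R) : R :=
  ∑ k ∈ range (N + 1), x k * u ^ (N - k) * v ^ k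

lemma homForm_succ {N : ℕ} {x : ℕ → R} (hx : x (N + 1) = 0) (u v : R) :
    homForm (N + 1) x u v = u * homForm N x u v := by
  rw [homForm, sum_range_succ, hx, zero_mul, zero_mul, add_zero, homForm, mul_sum]
  refine sum_congr rfl fun k hk => ?_
  rw [Nat.sub_add_comm (Nat.lt_succ_iff.mp (mem_range.mp hk)), pow_succ]
  ring

lemma homForm_succ_shiftSeq (N : ℕ) (x : ℕ → R) (u v : R) :
    homForm (N + 1) (shiftSeq x) u v = v * homForm N x u v := by
  rw [homForm, sum_range_succ', homForm, mul_sum]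
  simp only [shiftSeq, zero_mul, add_zero, Nat.add_sub_add_right, pow_succ]
  exact sum_congr rfl fun k _ => by ring

def chooseSqForm (n : ℕ) (u v : R) : R :=
  homForm n (fun k => (n.choose k : R) ^ 2) u v

lemma choose_sq_shiftSeq_recurrence (n k : ℕ) :
    (n + 2 : R) * ((n + 2).choose k : R) ^ 2 =
      (2 * n + 3) * (((n + 1).choose k : R) ^ 2 + shiftSeq (fun i => ((n + 1).choose i : R) ^ 2) k)
      - (n + 1) * ((n.choose k : R) ^ 2 - 2 * shiftSeq (fun i => (n.choose i : R) ^ 2) k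
          + shiftSeq (shiftSeq fun i => (n.choose i : R) ^ 2) k) := by
  match k with
  | 0 =>
    simp only [shiftSeq, Nat.choose_zero_right]
    push_cast; ring
  | 1 =>
    simp only [shiftSeq, Nat.choose_one_right, Nat.choose_zero_right]
    push_cast; ring
  | j + 2 =>
    have h := congrArg (Nat.cast : ℕ → R) (Nat.choose_sq_recurrence n j)
    push_cast at h
    simp only [shiftSeq]
    linear_combination h

theorem chooseSqForm_recurrence (n : ℕ) (u v : R) :
    (n + 2) * chooseSqForm (n + 2) u v =
      (2 * n + 3) * ((u + v) * chooseSqForm (n + 1) u v)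
        - (n + 1) * ((v - u) ^ 2 * chooseSqForm n u v) := by
  set x : ℕ → ℕ → R := fun m k => (m.choose k : R) ^ 2
  have hx {m k : ℕ} (h : m < k) : x m k = 0 := by simp [x, Nat.choose_eq_zero_of_lt h]
  have hu₁ : u * chooseSqForm (n + 1) u v = homForm (n + 2) (x (n + 1)) u v :=
    (homForm_succ (hx (by omega)) u v).symm
  have hv₁ : v * chooseSqForm (n + 1) u v = homForm (n + 2) (shiftSeq (x (n + 1))) u v :=
    (homForm_succ_shiftSeq _ _ u v).symm
  have huu : u ^ 2 * chooseSqForm n u v = homForm (n + 2) (x n) u v := by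
    rw [homForm_succ (hx (by omega)), homForm_succ (hx (by omega)), chooseSqForm]; ring
  have huv : u * v * chooseSqForm n u v = homForm (n + 2) (shiftSeq (x n)) u v := by
    rw [homForm_succ (x := shiftSeq (x n)) (hx (m := n) (by omega)), homForm_succ_shiftSeq,
      chooseSqForm]
    ring
  have hvv : v ^ 2 * chooseSqForm n u v = homForm (n + 2) (shiftSeq (shiftSeq (x n))) u v := by
    rw [homForm_succ_shiftSeq, homForm_succ_shiftSeq, chooseSqForm]; ring
  have hrhs : (2 * n + 3) * ((u + v) * chooseSqForm (n + 1) u v)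
        - (n + 1) * ((v - u) ^ 2 * chooseSqForm n u v) =
      (2 * n + 3) * (homForm (n + 2) (x (n + 1)) u v + homForm (n + 2) (shiftSeq (x (n + 1))) u v)
        - (n + 1) * (homForm (n + 2) (x n) u v - 2 * homForm (n + 2) (shiftSeq (x n)) u v
          + homForm (n + 2) (shiftSeq (shiftSeq (x n))) u v) := by
    rw [← hu₁, ← hv₁, ← huu, ← huv, ← hvv]; ring
  rw [hrhs, chooseSqForm]
  simp only [homForm, mul_sum, ← sum_add_distrib, ← sum_sub_distrib]
  refine sum_congr rfl fun k _ => ?_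
  linear_combination (u ^ (n + 2 - k) * v ^ k) * choose_sq_shiftSeq_recurrence (R := R) n k

end HomogeneousForm

lemma legendreP_eq_chooseSqForm (n : ℕ) (x : ℝ) :
    legendreP n x = (2 ^ n)⁻¹ * chooseSqForm n (x - 1) (x + 1) := by
  rw [legendreP, one_div]; rfl

lemma legendreP_zero (x : ℝ) : legendreP 0 x = 1 := by simp [legendreP]

lemma legendreP_one (x : ℝ) : legendreP 1 x = x := by
  simp [legendreP, sum_range_succ]; ring

theorem legendreP_succ_succ (n : ℕ) (x : ℝ) :
    (n + 2) * legendreP (n + 2) x =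
      (2 * n + 3) * x * legendreP (n + 1) x - (n + 1) * legendreP n x := by
  have h := chooseSqForm_recurrence n (x - 1) (x + 1)
  simp only [legendreP_eq_chooseSqForm]
  linear_combination (2 ^ (n + 2) : ℝ)⁻¹ * h

section PowerSeries

variable {𝕜 : Type*} [NontriviallyNormedField 𝕜]

lemma hasSum_shiftSeq_mul_pow_iff {x : ℕ → 𝕜} {z s : 𝕜} :
    HasSum (fun n => shiftSeq x n * z ^ n) s ↔ HasSum (fun n => x n * z ^ (n + 1)) s := by
  simpa [shiftSeq] using (hasSum_nat_add_iff (f := fun n => shiftSeq x n * z ^ n) 1 (g := s)).symm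

lemma HasSum.shiftSeq_mul_pow {x : ℕ → 𝕜} {z s : 𝕜} (h : HasSum (fun n => x n * z ^ n) s) :
    HasSum (fun n => shiftSeq x n * z ^ n) (z * s) :=
  hasSum_shiftSeq_mul_pow_iff.mpr <| (h.mul_left z).congr_fun fun n => by ring

theorem coeff_eq_of_hasSum_mul_pow {a b : ℕ → 𝕜} {g : 𝕜 → 𝕜}
    (ha : ∀ᶠ z in 𝓝 0, HasSum (fun n => a n * z ^ n) (g z))
    (hb : ∀ᶠ z in 𝓝 0, HasSum (fun n => b n * z ^ n) (g z)) : a = b := by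
  have series {x : ℕ → 𝕜} (hx : ∀ᶠ z in 𝓝 0, HasSum (fun n => x n * z ^ n) (g z)) :
      HasFPowerSeriesAt g (.ofScalars 𝕜 x) 0 := by
    rw [hasFPowerSeriesAt_iff]
    simpa only [FormalMultilinearSeries.coeff_ofScalars, smul_eq_mul, mul_comm, zero_add] using hx
  exact (FormalMultilinearSeries.ofScalars_series_eq_iff 𝕜 a b).mp
    ((series ha).eq_formalMultilinearSeries (series hb))

end PowerSeries

section TaylorCoefficients

noncomputable def taylorCoeff (f : ℂ → ℂ) (n : ℕ) : ℂ := iteratedDeriv n f 0 / n !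

variable {f : ℂ → ℂ} {r : ℝ}

lemma taylorCoeff_zero : taylorCoeff f 0 = f 0 := by simp [taylorCoeff]

lemma taylorCoeff_deriv (n : ℕ) : taylorCoeff (deriv f) n = (n + 1) * taylorCoeff f (n + 1) := by
  rw [taylorCoeff, taylorCoeff, ← iteratedDeriv_succ', Nat.factorial_succ]
  push_cast
  field_simp

lemma hasSum_taylorCoeff_mul_pow (hf : DifferentiableOn ℂ f (ball 0 r)) {z : ℂ}
    (hz : z ∈ ball 0 r) :
    HasSum (fun n => taylorCoeff f n * z ^ n) (f z) :=
  (Complex.hasSum_taylorSeries_on_ball hf hz).congr_fun fun n => by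
    simp only [taylorCoeff, smul_eq_mul, sub_zero]; ring

theorem taylorCoeff_recurrence_of_deriv {c : ℂ} (hr : 0 < r)
    (hf : DifferentiableOn ℂ f (ball 0 r))
    (hode : ∀ z ∈ ball 0 r, (1 - 2 * z * c + z ^ 2) * deriv f z = (c - z) * f z) :
    taylorCoeff f 1 = c * taylorCoeff f 0 ∧
      ∀ n : ℕ, (n + 2) * taylorCoeff f (n + 2) =
        (2 * n + 3) * c * taylorCoeff f (n + 1) - (n + 1) * taylorCoeff f n := by
  -- `u` and `a` are the coefficients of `z f'` and `f`; compare those of `z (1 - 2cz + z²) f'`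
  -- and `z (c - z) f`.
  set a := taylorCoeff f
  set u := shiftSeq (taylorCoeff (deriv f))
  have hu (n : ℕ) : u n = n * a n := by
    cases n <;> simp [u, shiftSeq, taylorCoeff_deriv, a]
  have hcoeff : (fun n => u n - 2 * c * shiftSeq u n + shiftSeq (shiftSeq u) n) =
      fun n => c * shiftSeq a n - shiftSeq (shiftSeq a) n := by
    refine coeff_eq_of_hasSum_mul_pow (g := fun z => z * ((c - z) * f z)) ?_ ?_ <;>
      filter_upwards [ball_mem_nhds (0 : ℂ) hr] with z hz
    · have hu₀ : HasSum (fun n => u n * z ^ n) (z * deriv f z) :=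
        (hasSum_taylorCoeff_mul_pow (hf.deriv isOpen_ball) hz).shiftSeq_mul_pow
      have hu₁ := hu₀.shiftSeq_mul_pow
      have hL := (hu₀.sub (hu₁.mul_left (2 * c))).add hu₁.shiftSeq_mul_pow
      rw [show z * deriv f z - 2 * c * (z * (z * deriv f z)) + z * (z * (z * deriv f z)) =
        z * ((c - z) * f z) by rw [← hode z hz]; ring] at hL
      exact hL.congr_fun fun n => by ring
    · have ha₁ : HasSum (fun n => shiftSeq a n * z ^ n) (z * f z) :=
        (hasSum_taylorCoeff_mul_pow hf hz).shiftSeq_mul_pow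
      have hR := (ha₁.mul_left c).sub ha₁.shiftSeq_mul_pow
      rw [show c * (z * f z) - z * (z * f z) = z * ((c - z) * f z) by ring] at hR
      exact hR.congr_fun fun n => by ring
  constructor
  · simpa [shiftSeq, hu] using congrFun hcoeff 1
  · intro n
    have h := congrFun hcoeff (n + 2)
    simp only [shiftSeq, hu] at h
    push_cast at h
    linear_combination h

end TaylorCoefficients

section LegendreGeneratingFunction

variable {c : ℝ}

lemma one_sub_two_mul_add_sq_mem_slitPlane (hc : c ∈ Set.Ioo (-1) 1) {z : ℂ} (hz : ‖z‖ < 1) :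
    1 - 2 * z * c + z ^ 2 ∈ slitPlane := by
  have hz' : z.re ^ 2 + z.im ^ 2 < 1 := by
    rw [← sq_lt_one_iff₀ (norm_nonneg z), Complex.sq_norm, normSq_apply] at hz
    linarith
  have hre : (1 - 2 * z * c + z ^ 2).re = 1 - 2 * z.re * c + z.re ^ 2 - z.im ^ 2 := by
    simp [pow_two]; ring
  have him : (1 - 2 * z * c + z ^ 2).im = 2 * z.im * (z.re - c) := by
    simp [pow_two]; ring
  -- `1 - 2zc + z² = (z - c)² + (1 - c²)` is a nonpositive real only if `z - c` is imaginary
  -- with `|z - c|² ≥ 1 - c²`, i.e. `|z| ≥ 1`.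
  rw [mem_slitPlane_iff, hre, him]
  by_contra! h
  rcases mul_eq_zero.mp h.2 with hy | hx
  · have hy : z.im = 0 := by simpa using hy
    nlinarith [sq_nonneg (z.re - c), hc.1, hc.2, h.1]
  · rw [sub_eq_zero.mp hx] at h hz'
    nlinarith [h.1]

noncomputable def legendreGenFun (c : ℝ) (z : ℂ) : ℂ := (1 - 2 * z * c + z ^ 2) ^ (-(1 / 2) : ℂ)

lemma legendreGenFun_zero : legendreGenFun c 0 = 1 := by simp [legendreGenFun]

lemma hasDerivAt_legendreGenFun (hc : c ∈ Set.Ioo (-1) 1) {z : ℂ} (hz : ‖z‖ < 1) :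
    HasDerivAt (legendreGenFun c)
      ((c - z) * legendreGenFun c z / (1 - 2 * z * c + z ^ 2)) z := by
  have hq := one_sub_two_mul_add_sq_mem_slitPlane hc hz
  have hpoly : HasDerivAt (fun w : ℂ => 1 - 2 * w * c + w ^ 2) (2 * z - 2 * c) z :=
    ((((hasDerivAt_id z).const_mul 2).mul_const (c : ℂ)).const_sub 1 |>.add
      (hasDerivAt_pow 2 z)).congr_deriv (by simp; ring)
  refine (hpoly.cpow_const (c := -(1 / 2)) hq).congr_deriv ?_
  rw [cpow_sub _ _ (slitPlane_ne_zero hq), cpow_one, legendreGenFun]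
  ring

lemma legendreGenFun_deriv_eq (hc : c ∈ Set.Ioo (-1) 1) {z : ℂ} (hz : ‖z‖ < 1) :
    (1 - 2 * z * c + z ^ 2) * deriv (legendreGenFun c) z = (c - z) * legendreGenFun c z := by
  rw [(hasDerivAt_legendreGenFun hc hz).deriv,
    mul_div_cancel₀ _ (slitPlane_ne_zero (one_sub_two_mul_add_sq_mem_slitPlane hc hz))]

lemma differentiableOn_legendreGenFun (hc : c ∈ Set.Ioo (-1) 1) :
    DifferentiableOn ℂ (legendreGenFun c) (ball 0 1) := fun _ hz =>
  (hasDerivAt_legendreGenFun hc (mem_ball_zero_iff.mp hz)).differentiableAt.differentiableWithinAt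

theorem taylorCoeff_legendreGenFun (hc : c ∈ Set.Ioo (-1) 1) (n : ℕ) :
    taylorCoeff (legendreGenFun c) n = legendreP n c := by
  obtain ⟨h₁, hrec⟩ := taylorCoeff_recurrence_of_deriv one_pos (differentiableOn_legendreGenFun hc)
    fun z hz => legendreGenFun_deriv_eq hc (mem_ball_zero_iff.mp hz)
  have h₀ : taylorCoeff (legendreGenFun c) 0 = 1 := by rw [taylorCoeff_zero, legendreGenFun_zero]
  induction n using Nat.twoStepInduction with
  | zero => simp [h₀, legendreP_zero]
  | one => simp [h₁, h₀, legendreP_one]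
  | more n ih₀ ih₁ =>
    refine mul_left_cancel₀ (show (n + 2 : ℂ) ≠ 0 by norm_cast) ?_
    rw [hrec, ih₀, ih₁]
    exact_mod_cast (legendreP_succ_succ n c).symm

theorem hasSum_legendreP_mul_pow (hc : c ∈ Set.Ioo (-1) 1) {z : ℂ} (hz : ‖z‖ < 1) :
    HasSum (fun n => (legendreP n c : ℂ) * z ^ n) (legendreGenFun c z) :=
  (hasSum_taylorCoeff_mul_pow (differentiableOn_legendreGenFun hc)
    (mem_ball_zero_iff.mpr hz)).congr_fun fun n => by rw [taylorCoeff_legendreGenFun hc]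

end LegendreGeneratingFunction

theorem hasSum_half_legendreP_add_mul_pow {c : ℝ} (hc : c ∈ Set.Ioo (-1) 1) {z : ℂ}
    (hz : ‖z‖ < 1) :
    HasSum (fun n : ℕ =>
        ((1 / 2 * (legendreP (n + 1) c + legendreP n c) : ℝ) : ℂ) * z ^ (n + 1))
      (-(1 / 2) + (z + 1) / (2 * ((1 - 2 * z * (c : ℂ) + z ^ 2) ^ (1 / 2 : ℂ)))) := by
  have hP := hasSum_legendreP_mul_pow hc hz
  have hP₁ : HasSum (fun n => (legendreP (n + 1) c : ℂ) * z ^ (n + 1)) (legendreGenFun c z - 1) :=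
    (hasSum_nat_add_iff (f := fun n => (legendreP n c : ℂ) * z ^ n) 1).mpr
      (by simpa [legendreP_zero] using hP)
  have hPz : HasSum (fun n => (legendreP n c : ℂ) * z ^ (n + 1)) (z * legendreGenFun c z) :=
    (hP.mul_left z).congr_fun fun n => by ring
  have hsqrt : (1 - 2 * z * c + z ^ 2) ^ (1 / 2 : ℂ) ≠ 0 := by
    rw [Ne, cpow_eq_zero_iff]
    exact fun h => slitPlane_ne_zero (one_sub_two_mul_add_sq_mem_slitPlane hc hz) h.1
  have h := (hP₁.add hPz).mul_left (1 / 2)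
  rw [show 1 / 2 * (legendreGenFun c z - 1 + z * legendreGenFun c z) =
      -(1 / 2) + (z + 1) / (2 * ((1 - 2 * z * (c : ℂ) + z ^ 2) ^ (1 / 2 : ℂ))) by
    rw [legendreGenFun, cpow_neg]; field_simp; ring] at h
  exact h.congr_fun fun n => by push_cast; ring

theorem moment_eq_half_legendreP_add {c : ℝ} (hc : c ∈ Set.Ioo (-1) 1) {m : ℕ → ℂ}
    (hm : ∀ z : ℂ, ‖z‖ < 1 → HasSum (fun n : ℕ => m (n + 1) * z ^ (n + 1))
      (-(1 / 2) + (z + 1) / (2 * ((1 - 2 * z * (c : ℂ) + z ^ 2) ^ (1 / 2 : ℂ))))) (n : ℕ) :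
    m (n + 1) = ((1 / 2 * (legendreP (n + 1) c + legendreP n c) : ℝ) : ℂ) := by
  have h : shiftSeq (fun n => m (n + 1)) =
      shiftSeq fun n => ((1 / 2 * (legendreP (n + 1) c + legendreP n c) : ℝ) : ℂ) := by
    refine coeff_eq_of_hasSum_mul_pow
      (g := fun z => -(1 / 2) + (z + 1) / (2 * ((1 - 2 * z * (c : ℂ) + z ^ 2) ^ (1 / 2 : ℂ))))
      ?_ ?_ <;>
      filter_upwards [ball_mem_nhds (0 : ℂ) one_pos] with z hz <;>
      rw [hasSum_shiftSeq_mul_pow_iff]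
    exacts [hm z (mem_ball_zero_iff.mp hz),
      hasSum_half_legendreP_add_mul_pow hc (mem_ball_zero_iff.mp hz)]
  exact congrFun h (n + 1)

lemma two_mul_exp_neg_half_sub_one_mem_Ioo {t : ℝ} (ht : 0 < t) :
    2 * Real.exp (-t / 2) - 1 ∈ Set.Ioo (-1) 1 := by
  have hlt : Real.exp (-t / 2) < 1 := Real.exp_lt_one_iff.mpr (by linarith)
  constructor <;> linarith [Real.exp_pos (-t / 2)]

/-- For `c ∈ (-1,1)` and `z ∈ 𝔻`, the series `∑_{n≥1} (1/2)(P_n(c)+P_{n-1}(c)) zⁿ`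
converges to `-1/2 + (z+1)/(2√(1-2zc+z²))` (principal complex square root).
In particular the `n`-th moment of the distribution `μ_t` of the monotone unitary
Brownian motion equals `(1/2)(P_n(2e^{-t/2}-1)+P_{n-1}(2e^{-t/2}-1))`. -/
theorem stmt_5 :
    (∀ c : ℝ, c ∈ Set.Ioo (-1 : ℝ) 1 → ∀ z : ℂ, ‖z‖ < 1 →
      HasSum (fun n : ℕ =>
          ((1 / 2 * (legendreP (n + 1) c + legendreP n c) : ℝ) : ℂ) * z ^ (n + 1))
        (-(1 / 2) + (z + 1) / (2 * ((1 - 2 * z * (c : ℂ) + z ^ 2) ^ (1 / 2 : ℂ))))) ∧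
    (∀ t : ℝ, 0 < t → ∀ m : ℕ → ℂ,
      (∀ z : ℂ, ‖z‖ < 1 →
        HasSum (fun n : ℕ => m (n + 1) * z ^ (n + 1))
          (-(1 / 2) + (z + 1) /
            (2 * ((1 - 2 * z * ((2 * Real.exp (-t / 2) - 1 : ℝ) : ℂ) + z ^ 2) ^ (1 / 2 : ℂ))))) →
      ∀ n : ℕ, 1 ≤ n →
        m n = ((1 / 2 * (legendreP n (2 * Real.exp (-t / 2) - 1)
          + legendreP (n - 1) (2 * Real.exp (-t / 2) - 1)) : ℝ) : ℂ)) := by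
  refine ⟨fun c hc z hz => hasSum_half_legendreP_add_mul_pow hc hz, fun t ht m hm n hn => ?_⟩
  obtain ⟨n, rfl⟩ := Nat.exists_eq_add_of_le' hn
  exact moment_eq_half_legendreP_add (two_mul_exp_neg_half_sub_one_mem_Ioo ht) hm n
end

section
/- Let c ∈ (−1,1) and θ ∈ (−π,π) with cos θ > c. Then the real part of (e^{iθ}+1)/√(1 − 2e^{iθ}c + e^{2iθ}) equals √2·cos(θ/2)/√(cos θ − c), where in the numerator √ denotes the principal branch of the complex square root and on the right-hand side the real square root of the positive number cos θ − c. -/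
/-! With `z = e^{iθ}` one has `1 - 2zc + z² = 2(cos θ - c)·z`, a positive multiple of `z`, so its
principal square root is `√(2(cos θ - c))·e^{iθ/2}`. Since also `z + 1 = 2cos(θ/2)·e^{iθ/2}`,
the phase `e^{iθ/2}` cancels and the quotient is the real number `2cos(θ/2)/√(2(cos θ - c))`. -/

open Complex

lemma one_sub_two_mul_exp_mul_I_mul_add_sq (θ c : ℂ) :
    1 - 2 * exp (θ * I) * c + exp (θ * I) ^ 2 = 2 * (cos θ - c) * exp (θ * I) := by
  have hinv : exp (θ * I) * exp (-θ * I) = 1 := by rw [← exp_add]; simp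
  linear_combination (-1 : ℂ) * hinv - exp (θ * I) * two_cos θ

lemma exp_mul_I_add_one (θ : ℂ) : exp (θ * I) + 1 = 2 * cos (θ / 2) * exp (θ / 2 * I) := by
  have hsq : exp (θ / 2 * I) * exp (θ / 2 * I) = exp (θ * I) := by rw [← exp_add]; ring_nf
  have hinv : exp (θ / 2 * I) * exp (-(θ / 2) * I) = 1 := by rw [← exp_add]; simp
  linear_combination -hsq - hinv - exp (θ / 2 * I) * two_cos (θ / 2)

lemma ofReal_mul_exp_mul_I_cpow_half {r θ : ℝ} (hr : 0 < r)
    (hθ : θ ∈ Set.Ioc (-Real.pi) Real.pi) :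
    ((r : ℂ) * exp (θ * I)) ^ (1 / 2 : ℂ) = Real.sqrt r * exp (θ / 2 * I) := by
  have hexp : (r : ℂ) * exp (θ * I) = exp (Real.log r + θ * I) := by
    rw [exp_add, ← ofReal_exp, Real.exp_log hr]
  have hsqrt : Real.sqrt r = Real.exp (Real.log r / 2) := by
    rw [Real.sqrt_eq_rpow, Real.rpow_def_of_pos hr]; ring_nf
  rw [hexp, cpow_def_of_ne_zero (exp_ne_zero _),
    log_exp (by simpa using hθ.1) (by simpa using hθ.2), hsqrt, ofReal_exp, ← exp_add]
  push_cast; ring_nf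

theorem stmt_6_general (c : ℝ) (θ : ℝ)
    (hθ : θ ∈ Set.Ioo (-Real.pi) Real.pi) (hcos : c < Real.cos θ) :
    ((Complex.exp (θ * Complex.I) + 1) /
        ((1 - 2 * Complex.exp (θ * Complex.I) * (c : ℂ)
          + Complex.exp (θ * Complex.I) ^ 2) ^ (1 / 2 : ℂ))).re =
      Real.sqrt 2 * Real.cos (θ / 2) / Real.sqrt (Real.cos θ - c) := by
  set r := 2 * (Real.cos θ - c)
  have hr : 0 < r := by linarith
  have hroot : (1 - 2 * exp (θ * I) * c + exp (θ * I) ^ 2) ^ (1 / 2 : ℂ)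
      = Real.sqrt r * exp (θ / 2 * I) := by
    rw [one_sub_two_mul_exp_mul_I_mul_add_sq, ← ofReal_mul_exp_mul_I_cpow_half hr
      (Set.Ioo_subset_Ioc_self hθ)]
    simp [r]
  have hquot : 2 * cos (θ / 2 : ℂ) / Real.sqrt r = (2 * Real.cos (θ / 2) / Real.sqrt r : ℝ) := by
    push_cast; ring
  rw [hroot, exp_mul_I_add_one, mul_div_mul_right _ _ (exp_ne_zero _), hquot, ofReal_re,
    Real.sqrt_mul zero_le_two]
  have h2 : Real.sqrt 2 ^ 2 = 2 := Real.sq_sqrt zero_le_two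
  have hx : 0 < Real.sqrt (Real.cos θ - c) := Real.sqrt_pos.2 (by linarith)
  field_simp
  linear_combination (-Real.cos (θ / 2)) * h2

/-- For `c ∈ (-1,1)` and `θ ∈ (-π,π)` with `cos θ > c`, the real part of
`(e^{iθ}+1)/√(1 - 2e^{iθ}c + e^{2iθ})` (principal complex square root) equals
`√2·cos(θ/2)/√(cos θ - c)` (real square root). -/
theorem stmt_6 (c : ℝ) (hc : c ∈ Set.Ioo (-1 : ℝ) 1) (θ : ℝ)
    (hθ : θ ∈ Set.Ioo (-Real.pi) Real.pi) (hcos : c < Real.cos θ) :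
    ((Complex.exp (θ * Complex.I) + 1) /
        ((1 - 2 * Complex.exp (θ * Complex.I) * (c : ℂ)
          + Complex.exp (θ * Complex.I) ^ 2) ^ (1 / 2 : ℂ))).re =
      Real.sqrt 2 * Real.cos (θ / 2) / Real.sqrt (Real.cos θ - c) :=
  stmt_6_general c θ hθ hcos
end

section
/- Let c ∈ (−1,1). Then (1/(2π)) ∫_{−π}^{π} √2·cos(θ/2)/√(cos θ − c) · 1_{{cos θ > c}} dθ = 1; that is, the function θ ↦ √2 cos(θ/2)/√(cos θ − c) on {θ ∈ (−π,π) : cos θ > c} (extended by 0 elsewhere) is a probability density with respect to the normalized Lebesgue measure dθ/(2π) on (−π,π). -/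
open Real Set intervalIntegral MeasureTheory

/-! With `a = √((1 - c) / 2)` one has `cos θ - c = 2 (a² - sin² (θ / 2))`, so the density is
`cos (θ / 2) / √(a² - sin² (θ / 2))`, the derivative of `2 arcsin (sin (θ / 2) / a)`. Because
`arcsin` is constant `± π / 2` outside `[-1, 1]`, this antiderivative stays a valid one (with
derivative `0`) off the support, so the fundamental theorem of calculus on `[-π, π]` gives
`π - (-π) = 2π`. The derivative fails to exist only at the two edges `± 2 arcsin a` of the
support, and the integrand being nonnegative takes care of integrability on the three pieces. -/

section FTC

variable {g g' : ℝ → ℝ} {a b c d : ℝ}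

theorem intervalIntegrable_deriv_and_integral_eq_sub_of_nonneg (hab : a ≤ b)
    (hcont : ContinuousOn g (Icc a b)) (hderiv : ∀ x ∈ Ioo a b, HasDerivAt g (g' x) x)
    (hpos : ∀ x ∈ Ioo a b, 0 ≤ g' x) :
    IntervalIntegrable g' volume a b ∧ ∫ x in a..b, g' x = g b - g a := by
  have hint : IntervalIntegrable g' volume a b :=
    intervalIntegrable_deriv_of_nonneg (by rwa [uIcc_of_le hab])
      (by simpa [hab] using hderiv) (by simpa [hab] using hpos)
  exact ⟨hint, integral_eq_sub_of_hasDerivAt_of_le hab hcont hderiv hint⟩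

theorem integral_deriv_eq_sub_of_nonneg_off_pair (hab : a ≤ b) (hbc : b ≤ c) (hcd : c ≤ d)
    (hcont : ContinuousOn g (Icc a d))
    (hderiv : ∀ x ∈ Ioo a d, x ≠ b → x ≠ c → HasDerivAt g (g' x) x)
    (hpos : ∀ x ∈ Ioo a d, 0 ≤ g' x) :
    ∫ x in a..d, g' x = g d - g a := by
  have piece : ∀ u v, a ≤ u → u ≤ v → v ≤ d → (∀ x ∈ Ioo u v, x ≠ b ∧ x ≠ c) →
      IntervalIntegrable g' volume u v ∧ ∫ x in u..v, g' x = g v - g u :=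
    fun u v hau huv hvd hbc' =>
      intervalIntegrable_deriv_and_integral_eq_sub_of_nonneg huv
        (hcont.mono (Icc_subset_Icc hau hvd))
        (fun x hx => hderiv x ⟨hau.trans_lt hx.1, hx.2.trans_le hvd⟩ (hbc' x hx).1 (hbc' x hx).2)
        (fun x hx => hpos x ⟨hau.trans_lt hx.1, hx.2.trans_le hvd⟩)
  obtain ⟨hint₁, h₁⟩ := piece a b le_rfl hab (hbc.trans hcd)
    fun x hx => ⟨hx.2.ne, (hx.2.trans_le hbc).ne⟩
  obtain ⟨hint₂, h₂⟩ := piece b c hab hbc hcd fun x hx => ⟨hx.1.ne', hx.2.ne⟩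
  obtain ⟨hint₃, h₃⟩ := piece c d (hab.trans hbc) hcd le_rfl
    fun x hx => ⟨(hbc.trans_lt hx.1).ne', hx.1.ne'⟩
  rw [← integral_add_adjacent_intervals hint₁ (hint₂.trans hint₃),
    ← integral_add_adjacent_intervals hint₂ hint₃, h₁, h₂, h₃]
  ring

end FTC

-- Where `|sin (x / 2)| > a` both sides are `0`: `arcsin` is locally constant there and `√` of a
-- negative number is `0`.
theorem hasDerivAt_two_mul_arcsin_sin_half_div {a x : ℝ} (ha : 0 < a)
    (hpos : sin (x / 2) ≠ a) (hneg : sin (x / 2) ≠ -a) :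
    HasDerivAt (fun θ => 2 * arcsin (sin (θ / 2) / a))
      (cos (x / 2) / √(a ^ 2 - sin (x / 2) ^ 2)) x := by
  have hsin : HasDerivAt (fun θ => sin (θ / 2) / a) (cos (x / 2) * (1 / 2) / a) x :=
    (((hasDerivAt_id' x).div_const 2).sin).div_const a
  have harcsin := ((hasDerivAt_arcsin (x := sin (x / 2) / a)
    (by rwa [ne_eq, div_eq_iff ha.ne', neg_one_mul])
    (by rwa [ne_eq, div_eq_one_iff_eq ha.ne'])).comp x hsin).const_mul 2
  refine harcsin.congr_deriv ?_
  have hsqrt : √(1 - (sin (x / 2) / a) ^ 2) = √(a ^ 2 - sin (x / 2) ^ 2) / a := by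
    rw [← sqrt_sq ha.le, ← sqrt_div' _ (sq_nonneg a), sqrt_sq ha.le]
    congr 1
    field_simp
  rw [hsqrt, one_div_div]
  field_simp

theorem sqrt_two_mul_cos_half_div_sqrt_cos_sub (c θ : ℝ) :
    √2 * cos (θ / 2) / √(cos θ - c) = cos (θ / 2) / √((1 - c) / 2 - sin (θ / 2) ^ 2) := by
  have hcos : cos θ - c = 2 * ((1 - c) / 2 - sin (θ / 2) ^ 2) := by
    have := sin_sq_eq_half_sub (θ / 2)
    rw [mul_div_cancel₀ θ two_ne_zero] at this
    linarith
  rw [hcos, sqrt_mul zero_le_two, mul_div_mul_left _ _ (by positivity)]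

theorem sin_half_ne_of_ne_two_mul_arcsin {a x : ℝ} (hx : x ∈ Icc (-π) π) (hxa : x ≠ 2 * arcsin a) :
    sin (x / 2) ≠ a := by
  rintro rfl
  rw [arcsin_sin (by linarith [hx.1]) (by linarith [hx.2])] at hxa
  exact hxa (by ring)

theorem integral_cos_half_div_sqrt_sq_sub_sin_half_sq {a : ℝ} (ha₀ : 0 < a) (ha₁ : a ≤ 1) :
    ∫ θ in (-π)..π, cos (θ / 2) / √(a ^ 2 - sin (θ / 2) ^ 2) = 2 * π := by
  set α := 2 * arcsin a
  have hα₀ : 0 ≤ α := by have := arcsin_nonneg.2 ha₀.le; positivity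
  have hαπ : α ≤ π := by linarith [arcsin_le_pi_div_two a]
  have hF : Continuous fun θ => 2 * arcsin (sin (θ / 2) / a) := by fun_prop
  rw [integral_deriv_eq_sub_of_nonneg_off_pair (g := fun θ => 2 * arcsin (sin (θ / 2) / a))
    (b := -α) (c := α) (by linarith) (by linarith) hαπ hF.continuousOn ?deriv ?nonneg]
  case deriv =>
    intro x hx hxα hxα'
    refine hasDerivAt_two_mul_arcsin_sin_half_div ha₀
      (sin_half_ne_of_ne_two_mul_arcsin (Ioo_subset_Icc_self hx) hxα') ?_
    refine sin_half_ne_of_ne_two_mul_arcsin (Ioo_subset_Icc_self hx) ?_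
    rwa [arcsin_neg, mul_neg]
  case nonneg =>
    intro x hx
    exact div_nonneg (cos_nonneg_of_mem_Icc ⟨by linarith [hx.1], by linarith [hx.2]⟩)
      (sqrt_nonneg _)
  have h1a : 1 ≤ 1 / a := by rw [le_div_iff₀ ha₀]; linarith
  simp only [neg_div, sin_neg, sin_pi_div_two, arcsin_of_one_le h1a,
    arcsin_of_le_neg_one (neg_le_neg h1a)]
  ring

/-- For `c ∈ (-1,1)`, the function `θ ↦ √2 cos(θ/2)/√(cos θ - c)` on
`{θ ∈ (-π,π) : cos θ > c}` (extended by `0` elsewhere) is a probability density with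
respect to the normalized Lebesgue measure `dθ/(2π)` on `(-π,π)`. -/
theorem stmt_7 (c : ℝ) (hc : c ∈ Set.Ioo (-1 : ℝ) 1) :
    (1 / (2 * Real.pi)) * ∫ θ in (-Real.pi)..Real.pi,
      (if c < Real.cos θ then
        Real.sqrt 2 * Real.cos (θ / 2) / Real.sqrt (Real.cos θ - c) else 0) = 1 := by
  obtain ⟨hc₁, hc₂⟩ := hc
  -- `√` vanishes on nonpositive reals, so the indicator is already built into the formula.
  have hind : ∀ θ, (if c < cos θ then √2 * cos (θ / 2) / √(cos θ - c) else 0)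
      = √2 * cos (θ / 2) / √(cos θ - c) := by
    intro θ
    split_ifs with h
    · rfl
    · rw [sqrt_eq_zero'.2 (sub_nonpos.2 (not_lt.1 h)), div_zero]
  set a := √((1 - c) / 2)
  have ha₀ : 0 < a := sqrt_pos.2 (by linarith)
  have ha₁ : a ≤ 1 := sqrt_le_one.2 (by linarith)
  have ha_sq : a ^ 2 = (1 - c) / 2 := sq_sqrt (by linarith)
  simp_rw [hind, sqrt_two_mul_cos_half_div_sqrt_cos_sub, ← ha_sq,
    integral_cos_half_div_sqrt_sq_sub_sin_half_sq ha₀ ha₁]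
  field_simp
end

section
/- Let t > 0 and let α ∈ (−π,π) with α ≠ 0. Then e^{iα}·exp(t(e^{iα}+1)/(2(e^{iα}−1))) = 1 if and only if there exists an integer n ≥ 0 such that g_t(cos α) = 2πn, i.e. if and only if cos α = x_n(t) for some n ≥ 0. Hence the set of solutions on the unit circle of the equation θ_t(ζ) = 1 is exactly { x_n(t) ± i·√(1 − x_n(t)²) : n ∈ ℕ }. -/
/-!
For `ζ = e^{iα}` with `0 < |α| < π` one has `(ζ + 1) / (ζ - 1) = -i cot(α/2)`, so `θ_t(ζ)` is the
unimodular number `exp(i(α - (t/2) cot(α/2)))`. By the half-angle formulas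
`(t/2) cot(|α|/2) - |α| = g_t(cos α)`, and the phase is odd in `α`, so `θ_t(ζ) = 1` iff
`g_t(cos α) ∈ 2πℤ`. As `g_t > -π`, only the values `2πn` with `n ≥ 0` occur, and since `g_t` is
injective this means `cos α = x_n(t)`.
-/

open Real Set
open scoped Complex

namespace ThetaUnitCircle

noncomputable def theta (t : ℝ) (z : ℂ) : ℂ :=
  z * cexp (t * (z + 1) / (2 * (z - 1)))

noncomputable def g (t x : ℝ) : ℝ :=
  t / 2 * √((1 + x) / (1 - x)) - arccos x

lemma cexp_ofReal_mul_I_eq_one_iff (y : ℝ) :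
    cexp (y * Complex.I) = 1 ↔ ∃ k : ℤ, y = k * (2 * π) := by
  rw [← Circle.coe_exp, Circle.coe_eq_one, Circle.exp_eq_one]

lemma exists_int_mul_two_pi_iff_exists_nat {y : ℝ} (hy : -π < y) :
    (∃ k : ℤ, y = k * (2 * π)) ↔ ∃ n : ℕ, y = 2 * π * n := by
  constructor
  · rintro ⟨k, rfl⟩
    have hk : 0 ≤ k := by
      by_contra! hk
      have : (k : ℝ) ≤ -1 := by exact_mod_cast Int.le_sub_one_of_lt hk
      nlinarith [pi_pos]
    lift k to ℕ using hk
    exact ⟨k, by push_cast; ring⟩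
  · rintro ⟨n, rfl⟩
    exact ⟨n, by push_cast; ring⟩

lemma theta_cexp_mul_I (t α : ℝ) :
    theta t (cexp (α * Complex.I)) = cexp ((α - t / 2 * cot (α / 2) : ℝ) * Complex.I) := by
  have hcot := Complex.cot_eq_exp_ratio (α / 2)
  rw [show 2 * Complex.I * (α / 2) = α * Complex.I by ring] at hcot
  rw [theta, ← Complex.exp_add]
  congr 1
  push_cast
  rw [hcot, ← neg_sub (cexp _) 1]
  simp only [div_eq_mul_inv, mul_inv, Complex.inv_I, inv_neg]
  ring_nf
  rw [Complex.I_sq]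
  ring

lemma sqrt_one_add_cos_div_one_sub_cos {β : ℝ} (hβ : β ∈ Ioo 0 π) :
    √((1 + cos β) / (1 - cos β)) = cot (β / 2) := by
  have hs : 0 < sin (β / 2) :=
    sin_pos_of_pos_of_lt_pi (by linarith [hβ.1]) (by linarith [hβ.2, pi_pos])
  have hc : 0 < cos (β / 2) :=
    cos_pos_of_mem_Ioo ⟨by linarith [hβ.1, pi_pos], by linarith [hβ.2]⟩
  have hc2 : cos (β / 2) ^ 2 = (1 + cos β) / 2 := by rw [cos_sq]; ring_nf
  have hs2 : sin (β / 2) ^ 2 = (1 - cos β) / 2 := by rw [sin_sq, hc2]; ring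
  rw [cot_eq_cos_div_sin, ← sqrt_sq (div_nonneg hc.le hs.le), div_pow, hc2, hs2,
    div_div_div_cancel_right₀ two_ne_zero]

lemma g_cos (t : ℝ) {β : ℝ} (hβ : β ∈ Ioo 0 π) : g t (cos β) = t / 2 * cot (β / 2) - β := by
  rw [g, sqrt_one_add_cos_div_one_sub_cos hβ, arccos_cos hβ.1.le hβ.2.le]

lemma neg_pi_lt_g {t x : ℝ} (ht : 0 ≤ t) (hx : -1 < x) : -π < g t x := by
  have := arccos_lt_pi.2 hx
  unfold g
  nlinarith [sqrt_nonneg ((1 + x) / (1 - x))]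

lemma g_strictMonoOn {t : ℝ} (ht : 0 ≤ t) : StrictMonoOn (g t) (Ico (-1) 1) := by
  intro a ha b hb hab
  have hsqrt : √((1 + a) / (1 - a)) ≤ √((1 + b) / (1 - b)) := by
    apply sqrt_le_sqrt
    rw [div_le_div_iff₀ (by linarith [ha.2]) (by linarith [hb.2])]
    nlinarith
  have harccos : arccos b < arccos a :=
    strictAntiOn_arccos ⟨ha.1, ha.2.le⟩ ⟨hb.1, hb.2.le⟩ hab
  unfold g
  nlinarith [mul_le_mul_of_nonneg_left hsqrt (by positivity : (0 : ℝ) ≤ t / 2)]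

lemma cos_mem_Ioo_of_ne_zero {α : ℝ} (hα : α ∈ Ioo (-π) π) (hα0 : α ≠ 0) :
    cos α ∈ Ioo (-1) 1 := by
  rw [← cos_abs]
  exact mapsTo_cos_Ioo ⟨abs_pos.2 hα0, abs_lt.2 hα⟩

lemma theta_cexp_mul_I_eq_one_iff (t : ℝ) {α : ℝ} (hα : α ∈ Ioo (-π) π) (hα0 : α ≠ 0) :
    theta t (cexp (α * Complex.I)) = 1 ↔ cexp (g t (cos α) * Complex.I) = 1 := by
  rw [theta_cexp_mul_I t α]
  rcases hα0.lt_or_gt with hneg | hpos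
  · have hphase : α - t / 2 * cot (α / 2) = g t (cos α) := by
      rw [← cos_neg, g_cos t ⟨neg_pos.2 hneg, by linarith [hα.1]⟩, cot_eq_cos_div_sin,
        cot_eq_cos_div_sin, neg_div, cos_neg, sin_neg, div_neg]
      ring
    rw [hphase]
  · have hphase : α - t / 2 * cot (α / 2) = -g t (cos α) := by
      rw [g_cos t ⟨hpos, hα.2⟩]
      ring
    rw [hphase, Complex.ofReal_neg, neg_mul, Complex.exp_neg, inv_eq_one]

lemma theta_cexp_mul_I_eq_one_iff_exists_cos_eq {t : ℝ} (ht : 0 ≤ t) {x : ℕ → ℝ}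
    (hx : ∀ n : ℕ, x n ∈ Ioo (-1 : ℝ) 1 ∧ g t (x n) = 2 * π * n)
    {α : ℝ} (hα : α ∈ Ioo (-π) π) (hα0 : α ≠ 0) :
    theta t (cexp (α * Complex.I)) = 1 ↔ ∃ n : ℕ, cos α = x n := by
  have hcos := cos_mem_Ioo_of_ne_zero hα hα0
  rw [theta_cexp_mul_I_eq_one_iff t hα hα0, cexp_ofReal_mul_I_eq_one_iff,
    exists_int_mul_two_pi_iff_exists_nat (neg_pi_lt_g ht hcos.1)]
  refine exists_congr fun n => ⟨fun h => ?_, fun h => h ▸ (hx n).2⟩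
  exact (g_strictMonoOn ht).injOn ⟨hcos.1.le, hcos.2⟩ ⟨(hx n).1.1.le, (hx n).1.2⟩
    (h.trans (hx n).2.symm)

lemma theta_eq_one_iff_exists_re_eq {t : ℝ} (ht : 0 ≤ t) {x : ℕ → ℝ}
    (hx : ∀ n : ℕ, x n ∈ Ioo (-1 : ℝ) 1 ∧ g t (x n) = 2 * π * n)
    {ζ : ℂ} (hζ : ‖ζ‖ = 1) (hζ1 : ζ ≠ 1) :
    theta t ζ = 1 ↔ ∃ n : ℕ, ζ.re = x n := by
  by_cases hm1 : ζ = -1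
  · subst hm1
    constructor
    · intro h
      norm_num [theta] at h
    · rintro ⟨n, hn⟩
      simp only [Complex.neg_re, Complex.one_re] at hn
      linarith [(hx n).1.1]
  set α := ζ.arg
  have hζα : cexp (α * Complex.I) = ζ := by
    simpa [hζ] using Complex.norm_mul_exp_arg_mul_I ζ
  have hα0 : α ≠ 0 := fun h => hζ1 (by rw [← hζα, h]; simp)
  have hαπ : α ≠ π := fun h => hm1 (by rw [← hζα, h, Complex.exp_pi_mul_I])
  have hα : α ∈ Ioo (-π) π := ⟨Complex.neg_pi_lt_arg ζ, (Complex.arg_le_pi ζ).lt_of_ne hαπ⟩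
  have hre : cos α = ζ.re := by
    rw [Complex.cos_arg (norm_ne_zero_iff.1 (by rw [hζ]; exact one_ne_zero)), hζ, div_one]
  rw [← hre, ← theta_cexp_mul_I_eq_one_iff_exists_cos_eq ht hx hα hα0, hζα]

lemma norm_eq_one_and_re_eq_iff {x : ℝ} (hx : x ∈ Icc (-1) 1) {ζ : ℂ} :
    ‖ζ‖ = 1 ∧ ζ.re = x ↔
      ζ = x + √(1 - x ^ 2) * Complex.I ∨ ζ = x - √(1 - x ^ 2) * Complex.I := by
  have hsq : √(1 - x ^ 2) ^ 2 = 1 - x ^ 2 := sq_sqrt (by nlinarith [hx.1, hx.2])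
  constructor
  · rintro ⟨hζ, rfl⟩
    have him : ζ.im ^ 2 = √(1 - ζ.re ^ 2) ^ 2 := by
      rw [hsq]
      nlinarith [Complex.sq_norm ζ, Complex.normSq_apply ζ]
    rcases sq_eq_sq_iff_eq_or_eq_neg.1 him with h | h
    · left; apply Complex.ext <;> simp [h]
    · right; apply Complex.ext <;> simp [h]
  · have hnorm (y : ℝ) (hy : y ^ 2 = 1 - x ^ 2) : ‖(x : ℂ) + y * Complex.I‖ = 1 := by
      rw [Complex.norm_add_mul_I, hy, add_sub_cancel, sqrt_one]
    rintro (rfl | rfl)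
    · exact ⟨hnorm _ hsq, by simp⟩
    · refine ⟨?_, by simp⟩
      rw [sub_eq_add_neg, ← neg_mul, ← Complex.ofReal_neg]
      exact hnorm _ (by rw [neg_sq, hsq])

end ThetaUnitCircle

/-- For `t > 0` and `α ∈ (-π,π)`, `α ≠ 0`: `θ_t(e^{iα}) = 1` iff `cos α = x_n(t)` for
some `n ≥ 0`, where `x_n(t) ∈ (-1,1)` is the unique solution of `g_t(x) = 2πn`.
Hence the solutions on the unit circle of `θ_t(ζ) = 1` are exactly
`{x_n(t) ± i√(1 - x_n(t)²) : n ∈ ℕ}`. -/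
theorem stmt_12 (t : ℝ) (ht : 0 < t)
    (x : ℕ → ℝ)
    (hx : ∀ n : ℕ, x n ∈ Set.Ioo (-1 : ℝ) 1 ∧
      t / 2 * Real.sqrt ((1 + x n) / (1 - x n)) - Real.arccos (x n) = 2 * Real.pi * n) :
    (∀ α : ℝ, α ∈ Set.Ioo (-Real.pi) Real.pi → α ≠ 0 →
      (Complex.exp ((α : ℂ) * Complex.I) *
          Complex.exp ((t : ℂ) * (Complex.exp ((α : ℂ) * Complex.I) + 1) /
            (2 * (Complex.exp ((α : ℂ) * Complex.I) - 1))) = 1 ↔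
        ∃ n : ℕ, Real.cos α = x n)) ∧
    {ζ : ℂ | ‖ζ‖ = 1 ∧ ζ ≠ 1 ∧
        ζ * Complex.exp ((t : ℂ) * (ζ + 1) / (2 * (ζ - 1))) = 1} =
      {ζ : ℂ | ∃ n : ℕ,
        ζ = (x n : ℂ) + (Real.sqrt (1 - (x n) ^ 2) : ℂ) * Complex.I ∨
        ζ = (x n : ℂ) - (Real.sqrt (1 - (x n) ^ 2) : ℂ) * Complex.I} := by
  have hxn (n : ℕ) : x n ∈ Icc (-1) 1 := Ioo_subset_Icc_self (hx n).1
  refine ⟨fun α hα hα0 =>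
    ThetaUnitCircle.theta_cexp_mul_I_eq_one_iff_exists_cos_eq ht.le hx hα hα0, ?_⟩
  ext ζ
  simp only [mem_ofPred_eq, ← ThetaUnitCircle.norm_eq_one_and_re_eq_iff (hxn _)]
  constructor
  · rintro ⟨hζ, hζ1, hθ⟩
    obtain ⟨n, hn⟩ := (ThetaUnitCircle.theta_eq_one_iff_exists_re_eq ht.le hx hζ hζ1).1 hθ
    exact ⟨n, hζ, hn⟩
  · rintro ⟨n, hζ, hn⟩
    have hζ1 : ζ ≠ 1 := by
      rintro rfl
      linarith [(hx n).1.2, show (1 : ℂ).re = 1 from rfl]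
    exact ⟨hζ, hζ1, (ThetaUnitCircle.theta_eq_one_iff_exists_re_eq ht.le hx hζ hζ1).2 ⟨n, hn⟩⟩
end

section
/- Let t > 0 and for each integer n ≥ 0 let x_n(t) ∈ (−1,1) be the unique solution of g_t(x) = 2πn. Then the sequence (x_n(t))_{n≥0} is strictly increasing and converges to 1 as n → ∞. Consequently, the solutions on the unit circle of θ_t(ζ) = 1 form a sequence of points accumulating only at 1, and they are all contained in the arc { e^{iθ} : −arccos(x_0(t)) ≤ θ ≤ arccos(x_0(t)) }. -/
/-!
On `[-1, 1)` the function `g_t` is strictly increasing and bounded below by `g_t(-1) = -π`.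
Hence `g_t(x_n) = 2πn` forces `(x_n)` to increase, and since `g_t` is finite at every point
of `[-1, 1)`, `x_n` eventually passes each of them, so `x_n → 1`.

On the unit circle `(ζ + 1)/(ζ - 1) = -i Im ζ / (1 - Re ζ)`, so
`θ_t(ζ) = exp (i (arg ζ - (t/2) Im ζ / (1 - Re ζ)))`. Since `√((1 + Re ζ)/(1 - Re ζ)) = |Im ζ| / (1 - Re ζ)`
and `arccos (Re ζ) = |arg ζ|`, the equation `θ_t(ζ) = 1` says `g_t(Re ζ) ∈ 2πℤ`. As `g_t ≥ -π`, the
multiple of `2π` is nonnegative, so `Re ζ ≥ x_0` and `|arg ζ| = arccos (Re ζ) ≤ arccos x_0`.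
-/

open Real Set Filter Topology

noncomputable def g (t x : ℝ) : ℝ := t / 2 * √((1 + x) / (1 - x)) - arccos x

noncomputable def theta (t : ℝ) (ζ : ℂ) : ℂ := ζ * Complex.exp (t * (ζ + 1) / (2 * (ζ - 1)))

lemma strictMonoOn_g {t : ℝ} (ht : 0 ≤ t) : StrictMonoOn (g t) (Ico (-1) 1) := by
  intro a ha b hb hab
  have hquot : (1 + a) / (1 - a) ≤ (1 + b) / (1 - b) := by
    rw [div_le_div_iff₀ (by linarith [ha.2]) (by linarith [hb.2])]
    nlinarith
  have hsqrt := Real.sqrt_le_sqrt hquot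
  have harccos := strictAntiOn_arccos (Ico_subset_Icc_self ha) (Ico_subset_Icc_self hb) hab
  unfold g
  nlinarith

lemma neg_pi_le_g {t : ℝ} (ht : 0 ≤ t) (x : ℝ) : -π ≤ g t x := by
  have := arccos_le_pi x
  have : 0 ≤ t / 2 * √((1 + x) / (1 - x)) := by positivity
  unfold g
  linarith

namespace Complex

lemma re_sq_add_im_sq_of_norm_eq_one {ζ : ℂ} (hζ : ‖ζ‖ = 1) : ζ.re ^ 2 + ζ.im ^ 2 = 1 := by
  rw [← normSq_add_mul_I, normSq_eq_norm_sq, re_add_im, hζ, one_pow]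

lemma re_lt_one_of_norm_eq_one {ζ : ℂ} (hζ : ‖ζ‖ = 1) (hne : ζ ≠ 1) : ζ.re < 1 := by
  refine lt_of_le_of_ne (hζ ▸ re_le_norm ζ) fun hre => hne (ext hre ?_)
  exact abs_re_eq_norm.1 (by rw [hre, hζ, abs_one])

lemma add_one_div_sub_one_of_norm_eq_one {ζ : ℂ} (hζ : ‖ζ‖ = 1) :
    (ζ + 1) / (ζ - 1) = -(ζ.im / (1 - ζ.re) : ℝ) * I := by
  -- at `ζ = 1` both sides vanish, since `x / 0 = 0`
  rcases eq_or_ne ζ 1 with rfl | hne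
  · simp
  have hsq := re_sq_add_im_sq_of_norm_eq_one hζ
  have hre : 1 - ζ.re ≠ 0 := by linarith [re_lt_one_of_norm_eq_one hζ hne]
  set c : ℝ := ζ.im / (1 - ζ.re)
  have hc : c * (1 - ζ.re) = ζ.im := div_mul_cancel₀ _ hre
  rw [div_eq_iff (sub_ne_zero.2 hne)]
  apply ext <;> simp
  · exact mul_right_cancel₀ hre (by linear_combination -hsq - ζ.im * hc)
  · linarith

lemma abs_arg_eq_arccos {z : ℂ} (hz : z ≠ 0) : |arg z| = arccos (z.re / ‖z‖) := by
  rcases le_or_gt 0 z.im with him | him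
  · rw [abs_of_nonneg (arg_nonneg_iff.2 him), arg_of_im_nonneg_of_ne_zero him hz]
  · rw [arg_of_im_neg him, abs_neg, abs_of_nonneg (arccos_nonneg _)]

lemma exp_ofReal_mul_I_eq_one_iff {r : ℝ} : exp (r * I) = 1 ↔ ∃ k : ℤ, r = 2 * π * k := by
  rw [exp_eq_one_iff]
  refine exists_congr fun k => ?_
  rw [show (k : ℂ) * (2 * π * I) = ((2 * π * k : ℝ) : ℂ) * I by push_cast; ring,
    mul_left_inj' I_ne_zero, ofReal_inj]

end Complex

open Complex in
lemma theta_eq_one_iff {t : ℝ} {ζ : ℂ} (hζ : ‖ζ‖ = 1) :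
    theta t ζ = 1 ↔ ∃ k : ℤ, arg ζ - t / 2 * (ζ.im / (1 - ζ.re)) = 2 * π * k := by
  have hζexp : exp (arg ζ * I) = ζ := by simpa [hζ] using norm_mul_exp_arg_mul_I ζ
  have : theta t ζ = exp (↑(arg ζ - t / 2 * (ζ.im / (1 - ζ.re))) * I) := by
    rw [theta, mul_div_mul_comm, add_one_div_sub_one_of_norm_eq_one hζ]
    nth_rw 1 [← hζexp]
    rw [← Complex.exp_add]
    push_cast
    ring_nf
  rw [this, exp_ofReal_mul_I_eq_one_iff]

lemma g_re_of_norm_eq_one (t : ℝ) {ζ : ℂ} (hζ : ‖ζ‖ = 1) :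
    g t ζ.re = t / 2 * (|ζ.im| / (1 - ζ.re)) - |Complex.arg ζ| := by
  have hsqrt : √((1 + ζ.re) / (1 - ζ.re)) = |ζ.im| / (1 - ζ.re) := by
    rcases eq_or_ne ζ.re 1 with hre | hre
    · simp [hre]
    have hsq := Complex.re_sq_add_im_sq_of_norm_eq_one hζ
    rw [← sqrt_sq (div_nonneg (abs_nonneg ζ.im) (by linarith [hζ ▸ Complex.re_le_norm ζ])),
      div_pow, sq_abs]
    have : 1 - ζ.re ≠ 0 := sub_ne_zero.2 (Ne.symm hre)
    congr 1
    field_simp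
    linear_combination -hsq
  rw [g, hsqrt, Complex.abs_arg_eq_arccos (norm_ne_zero_iff.1 (by simp [hζ])), hζ, div_one]

lemma exists_g_re_eq_two_pi_mul_int {t : ℝ} {ζ : ℂ} (hζ : ‖ζ‖ = 1) (hθ : theta t ζ = 1) :
    ∃ m : ℤ, g t ζ.re = 2 * π * m := by
  obtain ⟨k, hk⟩ := (theta_eq_one_iff hζ).1 hθ
  rw [g_re_of_norm_eq_one t hζ]
  rcases le_or_gt 0 ζ.im with him | him
  · rw [abs_of_nonneg him, abs_of_nonneg (Complex.arg_nonneg_iff.2 him)]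
    exact ⟨-k, by push_cast; linarith⟩
  · rw [abs_of_neg him, abs_of_neg (Complex.arg_neg_iff.2 him), neg_div]
    exact ⟨k, by linarith⟩

lemma le_of_g_eq_two_pi_mul_int {t y₀ y : ℝ} {k : ℤ} (ht : 0 ≤ t) (hy₀ : y₀ ∈ Ico (-1) 1)
    (hg₀ : g t y₀ = 0) (hy : y ∈ Ico (-1) 1) (hk : g t y = 2 * π * k) : y₀ ≤ y := by
  have hk_nonneg : 0 ≤ k := by
    have hlow := neg_pi_le_g ht y
    rw [hk] at hlow
    have : (-1 : ℝ) < k := by nlinarith [pi_pos]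
    have : -1 < k := by exact_mod_cast this
    omega
  refine ((strictMonoOn_g ht).le_iff_le hy₀ hy).1 ?_
  rw [hg₀, hk]
  positivity

section Solutions

variable {t : ℝ} {x : ℕ → ℝ}

lemma strictMono_of_g_eq (ht : 0 ≤ t) (hmem : ∀ n, x n ∈ Ico (-1) 1)
    (hx : ∀ n : ℕ, g t (x n) = 2 * π * n) : StrictMono x := fun m n hmn =>
  ((strictMonoOn_g ht).lt_iff_lt (hmem m) (hmem n)).1 <| by
    rw [hx, hx]
    exact mul_lt_mul_of_pos_left (Nat.cast_lt.2 hmn) (by positivity)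

lemma tendsto_one_of_g_eq (ht : 0 ≤ t) (hmem : ∀ n, x n ∈ Ico (-1) 1)
    (hx : ∀ n : ℕ, g t (x n) = 2 * π * n) : Tendsto x atTop (𝓝 1) := by
  rw [tendsto_order]
  refine ⟨fun a ha => ?_, fun a ha => .of_forall fun n => (hmem n).2.trans ha⟩
  have hb : max a 0 ∈ Ico (-1) 1 := ⟨by linarith [le_max_right a 0], max_lt ha one_pos⟩
  obtain ⟨N, hN⟩ := exists_nat_gt (g t (max a 0) / (2 * π))
  rw [div_lt_iff₀' (by positivity)] at hN
  filter_upwards [eventually_ge_atTop N] with n hn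
  have hgn : g t (max a 0) < g t (x n) := by
    rw [hx]
    exact hN.trans_le (by gcongr)
  exact (le_max_left a 0).trans_lt (((strictMonoOn_g ht).lt_iff_lt hb (hmem n)).1 hgn)

lemma abs_arg_le_arccos_of_theta_eq_one (ht : 0 ≤ t) (hmem : ∀ n, x n ∈ Ico (-1) 1)
    (hx : ∀ n : ℕ, g t (x n) = 2 * π * n) {ζ : ℂ} (hζ : ‖ζ‖ = 1) (hne : ζ ≠ 1)
    (hθ : theta t ζ = 1) : |Complex.arg ζ| ≤ arccos (x 0) := by
  obtain ⟨m, hm⟩ := exists_g_re_eq_two_pi_mul_int hζ hθ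
  have hre : ζ.re ∈ Ico (-1) 1 :=
    ⟨by linarith [neg_abs_le ζ.re, hζ ▸ Complex.abs_re_le_norm ζ],
      Complex.re_lt_one_of_norm_eq_one hζ hne⟩
  have hx₀ : x 0 ≤ ζ.re := le_of_g_eq_two_pi_mul_int ht (hmem 0) (by simpa using hx 0) hre hm
  calc |Complex.arg ζ| = arccos ζ.re := by
        rw [Complex.abs_arg_eq_arccos (norm_ne_zero_iff.1 (by simp [hζ])), hζ, div_one]
    _ ≤ arccos (x 0) := arccos_le_arccos hx₀

end Solutions

/-- For `t > 0`, the sequence `(x_n(t))` of solutions of `g_t(x) = 2πn` is strictly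
increasing and converges to `1`; consequently the solutions on the unit circle of
`θ_t(ζ) = 1` accumulate only at `1` and are all contained in the arc
`{e^{iθ} : -arccos(x_0(t)) ≤ θ ≤ arccos(x_0(t))}`. -/
theorem stmt_13 (t : ℝ) (ht : 0 < t)
    (x : ℕ → ℝ)
    (hx : ∀ n : ℕ, x n ∈ Set.Ioo (-1 : ℝ) 1 ∧
      t / 2 * Real.sqrt ((1 + x n) / (1 - x n)) - Real.arccos (x n) = 2 * Real.pi * n) :
    StrictMono x ∧
    Filter.Tendsto x Filter.atTop (nhds 1) ∧
    {ζ : ℂ | ‖ζ‖ = 1 ∧ ζ ≠ 1 ∧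
        ζ * Complex.exp ((t : ℂ) * (ζ + 1) / (2 * (ζ - 1))) = 1} ⊆
      {ζ : ℂ | ∃ θ : ℝ, -Real.arccos (x 0) ≤ θ ∧ θ ≤ Real.arccos (x 0) ∧
        ζ = Complex.exp ((θ : ℂ) * Complex.I)} := by
  have hg : ∀ n : ℕ, g t (x n) = 2 * π * n := fun n => (hx n).2
  have hmem : ∀ n, x n ∈ Ico (-1 : ℝ) 1 := fun n => Ioo_subset_Ico_self (hx n).1
  refine ⟨strictMono_of_g_eq ht.le hmem hg, tendsto_one_of_g_eq ht.le hmem hg, ?_⟩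
  rintro ζ ⟨hζ, hne, hθ⟩
  have harc := abs_le.1 (abs_arg_le_arccos_of_theta_eq_one ht.le hmem hg hζ hne hθ)
  exact ⟨Complex.arg ζ, harc.1, harc.2, by simpa [hζ] using (Complex.norm_mul_exp_arg_mul_I ζ).symm⟩
end

section
/- Let t > 0 and let α ∈ (−π,π), α ≠ 0, be such that θ_t(e^{iα}) = 1, where θ_t(z) = z·exp(t(z+1)/(2(z−1))). Then the complex derivative of θ_t at ζ = e^{iα} satisfies |θ_t'(e^{iα})| = (t + 2(1 − cos α))/(2(1 − cos α)); equivalently, 1/|θ_t'(e^{iα})| = 2(1 − cos α)/(t + 2(1 − cos α)). -/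
/-!
Writing `θ_t(z) = z e^{g(z)}` with `g(z) = t(z+1)/(2(z-1))`, one has `g' = -t/(z-1)²`, so
`θ_t'(z) = e^{g(z)} (1 - t z/(z-1)²)`. At a solution `ζ` of `θ_t(ζ) = 1` the exponential factor is
`ζ⁻¹`, of modulus one, and for `ζ = e^{iα}` the quantity `(ζ-1)²/ζ = ζ - 2 + ζ⁻¹` is the real number
`2 cos α - 2`, so `|θ_t'(ζ)| = 1 + t/(2(1 - cos α))`.
-/

open Complex

theorem hasDerivAt_mul_cexp_mul_add_one_div {c z : ℂ} (hz : z ≠ 1) :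
    HasDerivAt (fun w : ℂ => w * exp (c * (w + 1) / (2 * (w - 1))))
      (exp (c * (z + 1) / (2 * (z - 1))) * (1 - c * z / (z - 1) ^ 2)) z := by
  have hz' : z - 1 ≠ 0 := sub_ne_zero.mpr hz
  have hnum : HasDerivAt (fun w : ℂ => c * (w + 1)) c z := by
    simpa using ((hasDerivAt_id z).add_const 1).const_mul c
  have hden : HasDerivAt (fun w : ℂ => 2 * (w - 1)) 2 z := by
    simpa using ((hasDerivAt_id z).sub_const 1).const_mul (2 : ℂ)
  have hquot : HasDerivAt (fun w : ℂ => c * (w + 1) / (2 * (w - 1)))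
      ((c * (2 * (z - 1)) - c * (z + 1) * 2) / (2 * (z - 1)) ^ 2) z :=
    hnum.div hden (by simpa using hz')
  refine ((hasDerivAt_id' z).mul hquot.cexp).congr_deriv ?_
  field_simp
  ring

theorem Complex.exp_ofReal_mul_I_sub_one_sq (α : ℝ) :
    (exp (α * I) - 1) ^ 2 = -2 * exp (α * I) * (1 - Real.cos α) := by
  have hinv : exp (-(α : ℂ) * I) = (exp (α * I))⁻¹ := by rw [← exp_neg]; ring_nf
  have hne : exp (α * I) ≠ 0 := exp_ne_zero _
  rw [ofReal_cos, cos, hinv]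
  field_simp
  ring

theorem Real.cos_lt_one_of_mem_Ioo {α : ℝ} (hα : α ∈ Set.Ioo (-Real.pi) Real.pi) (hα0 : α ≠ 0) :
    cos α < 1 := by
  refine (cos_le_one α).lt_of_ne fun h => hα0 ?_
  exact (cos_eq_one_iff_of_lt_of_lt (by linarith [hα.1, Real.pi_pos])
    (by linarith [hα.2, Real.pi_pos])).mp h

/-- For `t > 0` and `α ∈ (-π,π)`, `α ≠ 0`, with `θ_t(e^{iα}) = 1` where
`θ_t(z) = z exp(t(z+1)/(2(z-1)))`, the complex derivative satisfies
`|θ_t'(e^{iα})| = (t + 2(1 - cos α))/(2(1 - cos α))`. -/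
theorem stmt_15 (t : ℝ) (ht : 0 < t) (α : ℝ)
    (hα : α ∈ Set.Ioo (-Real.pi) Real.pi) (hα0 : α ≠ 0)
    (hroot : Complex.exp ((α : ℂ) * Complex.I) *
      Complex.exp ((t : ℂ) * (Complex.exp ((α : ℂ) * Complex.I) + 1) /
        (2 * (Complex.exp ((α : ℂ) * Complex.I) - 1))) = 1) :
    ‖deriv (fun z : ℂ => z * Complex.exp ((t : ℂ) * (z + 1) / (2 * (z - 1))))
        (Complex.exp ((α : ℂ) * Complex.I))‖ =
      (t + 2 * (1 - Real.cos α)) / (2 * (1 - Real.cos α)) := by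
  set ζ := exp (α * I)
  have hcos : 0 < 1 - Real.cos α := sub_pos.mpr (Real.cos_lt_one_of_mem_Ioo hα hα0)
  have hsq : (ζ - 1) ^ 2 = -2 * ζ * (1 - Real.cos α) := exp_ofReal_mul_I_sub_one_sq α
  have hζ0 : ζ ≠ 0 := exp_ne_zero _
  have hcos' : (1 : ℂ) - Real.cos α ≠ 0 := by exact_mod_cast hcos.ne'
  have hζ1 : ζ ≠ 1 := fun h => hcos' (by simpa [h] using hsq)
  rw [(hasDerivAt_mul_cexp_mul_add_one_div hζ1).deriv, eq_inv_of_mul_eq_one_right hroot]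
  have hfactor : 1 - t * ζ / (ζ - 1) ^ 2 =
      ((t + 2 * (1 - Real.cos α)) / (2 * (1 - Real.cos α)) : ℝ) := by
    rw [hsq]
    simp only [ofReal_div, ofReal_add, ofReal_mul, ofReal_sub, ofReal_one, ofReal_ofNat]
    field_simp
    ring
  rw [hfactor, norm_mul, norm_inv, norm_exp_ofReal_mul_I, inv_one, one_mul, norm_real,
    Real.norm_of_nonneg (by positivity)]
end

section
/- Let t ∈ ℝ. For every z in the open unit disk, exp(tz/(z−1)) = 1 + ∑_{n=1}^{∞} ( ∑_{i=0}^{n−1} (n−1 choose i) · (−t)^{i+1}/(i+1)! ) zⁿ, where the series on the right-hand side converges for |z| < 1. -/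
/-!
With `u = z / (1 - z)` one has `t z / (z - 1) = -t u`, so `exp (t z / (z - 1)) - 1` is
`∑_{k ≥ 0} c_k u^(k+1)` with `c_k = (-t)^(k+1) / (k+1)!`. Expanding
`u^(k+1) = ∑_m C(k+m, k) z^(k+m+1)` gives a double series that converges absolutely for `|z| < 1`,
and summing it along the antidiagonals `k + m = n` collects `∑_k C(n, k) c_k` as the coefficient
of `z^(n+1)`.
-/

open Finset Nat

theorem HasSum.sum_antidiagonal {M : Type*} [AddCommMonoid M] [TopologicalSpace M]
    [ContinuousAdd M] [RegularSpace M] {f : ℕ × ℕ → M} {a : M} (h : HasSum f a) :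
    HasSum (fun n => ∑ p ∈ antidiagonal n, f p) a :=
  (HasAntidiagonal.sigmaAntidiagonalEquivProd.hasSum_iff.2 h).sigma fun n =>
    (antidiagonal n).hasSum _

section

variable {𝕜 : Type*} [NormedField 𝕜]

theorem hasSum_mul_choose_mul_pow_add_succ (k : ℕ) (c : 𝕜) {z : 𝕜} (hz : ‖z‖ < 1) :
    HasSum (fun m => c * ((k + m).choose k : 𝕜) * z ^ (k + m + 1))
      (c * (z / (1 - z)) ^ (k + 1)) := by
  have h := (hasSum_choose_mul_geometric_of_norm_lt_one k hz).mul_left (c * z ^ (k + 1))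
  rw [mul_one_div, mul_div_assoc, ← div_pow] at h
  exact h.congr_fun fun m => by rw [add_comm k m]; ring

theorem summable_mul_choose_mul_pow_add_succ [CompleteSpace 𝕜] {c : ℕ → 𝕜} {z : 𝕜}
    (hz : ‖z‖ < 1) (hc : Summable fun k => ‖c k‖ * (‖z‖ / (1 - ‖z‖)) ^ (k + 1)) :
    Summable fun p : ℕ × ℕ => c p.1 * ((p.1 + p.2).choose p.1 : 𝕜) * z ^ (p.1 + p.2 + 1) := by
  have hnorm : ‖‖z‖‖ < 1 := by rwa [norm_norm]
  have fiber k := hasSum_mul_choose_mul_pow_add_succ k ‖c k‖ hnorm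
  have hG : Summable fun p : ℕ × ℕ =>
      ‖c p.1‖ * ((p.1 + p.2).choose p.1 : ℝ) * ‖z‖ ^ (p.1 + p.2 + 1) :=
    (summable_prod_of_nonneg fun _ => by positivity).2
      ⟨fun k => (fiber k).summable, hc.congr fun k => (fiber k).tsum_eq.symm⟩
  refine .of_norm_bounded hG fun p => ?_
  rw [norm_mul, norm_mul, norm_pow]
  gcongr
  simpa using Nat.norm_cast_le (α := 𝕜) _

theorem hasSum_sum_choose_mul_mul_pow_succ [CompleteSpace 𝕜] {c : ℕ → 𝕜} {z : 𝕜}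
    (hz : ‖z‖ < 1) (hc : Summable fun k => ‖c k‖ * (‖z‖ / (1 - ‖z‖)) ^ (k + 1)) :
    HasSum (fun n => (∑ i ∈ range (n + 1), (n.choose i : 𝕜) * c i) * z ^ (n + 1))
      (∑' k, c k * (z / (1 - z)) ^ (k + 1)) := by
  have h := (summable_mul_choose_mul_pow_add_succ hz hc).hasSum
  rw [(h.prod_fiberwise fun k => hasSum_mul_choose_mul_pow_add_succ k (c k) hz).tsum_eq]
  refine h.sum_antidiagonal.congr_fun fun n => ?_
  rw [sum_mul,
    ← Nat.sum_antidiagonal_eq_sum_range_succ fun i _ => (n.choose i : 𝕜) * c i * z ^ (n + 1)]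
  refine sum_congr rfl fun p hp => ?_
  rw [HasAntidiagonal.mem_antidiagonal.1 hp]
  ring

end

theorem Complex.hasSum_pow_succ_div_factorial (x : ℂ) :
    HasSum (fun k : ℕ => x ^ (k + 1) / (k + 1)!) (exp x - 1) := by
  have h := NormedSpace.expSeries_div_hasSum_exp x
  rw [← Complex.exp_eq_exp_ℂ] at h
  simpa using (hasSum_nat_add_iff' 1).2 h

/-- For `t ∈ ℝ` and `z` in the open unit disk,
`exp(tz/(z-1)) = 1 + ∑_{n≥1} (∑_{i=0}^{n-1} (n-1 choose i) (-t)^{i+1}/(i+1)!) zⁿ`. -/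
theorem stmt_19 (t : ℝ) (z : ℂ) (hz : ‖z‖ < 1) :
    HasSum (fun n : ℕ =>
      (∑ i ∈ Finset.range (n + 1),
          (n.choose i : ℂ) * (-(t : ℂ)) ^ (i + 1) / ((i + 1).factorial : ℂ)) *
        z ^ (n + 1))
      (Complex.exp ((t : ℂ) * z / (z - 1)) - 1) := by
  set c : ℕ → ℂ := fun k => (-(t : ℂ)) ^ (k + 1) / (k + 1)!
  have hc : Summable fun k => ‖c k‖ * (‖z‖ / (1 - ‖z‖)) ^ (k + 1) := by
    refine ((summable_nat_add_iff 1).2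
      (Real.summable_pow_div_factorial (|t| * (‖z‖ / (1 - ‖z‖))))).congr fun k => ?_
    simp only [c, mul_pow, Complex.norm_div, norm_pow, norm_neg, Complex.norm_real,
      Real.norm_eq_abs, RCLike.norm_natCast]
    ring
  have hsum : ∑' k, c k * (z / (1 - z)) ^ (k + 1) = Complex.exp (t * z / (z - 1)) - 1 := by
    rw [← (Complex.hasSum_pow_succ_div_factorial _).tsum_eq]
    refine tsum_congr fun k => ?_
    rw [← neg_sub 1 z, div_neg, mul_div_assoc, ← neg_mul, mul_pow, div_mul_eq_mul_div]
  rw [← hsum]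
  exact (hasSum_sum_choose_mul_mul_pow_succ hz hc).congr_fun fun n => by
    simp only [c, mul_div_assoc]
end
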